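/- arXiv:1010.1066 — 7 statements merged into one kernel-verified Lean document; each statement's English description precedes it below -/
import Mathlib

section
/- For any partial injection f : A ⊎ B ↠ C ⊎ D (with A,B disjoint and C,D disjoint) and any partial injection g : D ↠ B, and for every natural number n, the partial injections (f(gf)^i) restricted to domain A and codomain C, for i = 0,…,n, have pairwise disjoint domains and pairwise disjoint codomains, so their sum Ex_n(f,g) is a well-defined partial injection from a subset of A to a subset of C. -/
namespace IN

/-- Partial injections of integers represented as functional, injective relations. -/
abbrev Rel' := ℕ → ℕ → Prop

def IsPInj (f : Rel') : Prop :=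
  (∀ x y y', f x y → f x y' → y = y') ∧ (∀ x x' y, f x y → f x' y → x = x')

def dom (f : Rel') : Set ℕ := {x | ∃ y, f x y}
def cod (f : Rel') : Set ℕ := {y | ∃ x, f x y}
/-- inverse partial injection f⋆ -/
def inv (f : Rel') : Rel' := fun x y => f y x
/-- `comp g f` applies `f` first, then `g` (i.e. g ∘ f). -/
def comp (g f : Rel') : Rel' := fun x z => ∃ y, f x y ∧ g y z
/-- sum of partial injections (union of graphs) -/
def rsum (f g : Rel') : Rel' := fun x y => f x y ∨ g x y
/-- the empty partial injection -/
def zero : Rel' := fun _ _ => False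
/-- restriction of f to domain E and codomain F -/
def restr (f : Rel') (E F : Set ℕ) : Rel' := fun x y => f x y ∧ x ∈ E ∧ y ∈ F

/-- `iter f g n` is the partial injection f(gf)^n. -/
def iter (f g : Rel') : ℕ → Rel'
  | 0 => f
  | n + 1 => comp (iter f g n) (comp g f)

/-- Ex_n(f,g) = Σ_{i ≤ n} (f(gf)^i)|_{A→C} -/
def Exn (f g : Rel') (A C : Set ℕ) (n : ℕ) : Rel' :=
  fun x y => ∃ i ≤ n, restr (iter f g i) A C x y

/-- Ex(f,g), the execution formula: union of the Ex_n(f,g). -/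
def Ex (f g : Rel') (A C : Set ℕ) : Rel' :=
  fun x y => ∃ i, restr (iter f g i) A C x y

/-- w-permutation: involutive partial permutation of finite domain -/
def IsWPerm (σ : Rel') : Prop :=
  IsPInj σ ∧ (∀ x y, σ x y → σ y x) ∧ (dom σ).Finite

/-- Ex₀-composition σ ⋈_f τ = Ex(σ+τ, f+f⋆) -/
def cexec (σ τ f : Rel') : Rel' :=
  Ex (rsum σ τ) (rsum f (inv f))
    ((dom σ ∪ dom τ) \ (dom f ∪ cod f)) ((dom σ ∪ dom τ) \ (dom f ∪ cod f))


lemma comp_pinj {f g : Rel'} (hf : IsPInj f) (hg : IsPInj g) : IsPInj (comp g f) := by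
  constructor
  · rintro x y y' ⟨u, hxu, huy⟩ ⟨v, hxv, hvy⟩
    have : u = v := hf.1 x u v hxu hxv
    subst this
    exact hg.1 u y y' huy hvy
  · rintro x x' y ⟨u, hxu, huy⟩ ⟨v, hxv, hvy⟩
    have : u = v := hg.2 u v y huy hvy
    subst this
    exact hf.2 x x' u hxu hxv

lemma iter_pinj {f g : Rel'} (hf : IsPInj f) (hg : IsPInj g) (n : ℕ) :
    IsPInj (iter f g n) := by
  induction n with
  | zero => exact hf
  | succ n ih => exact comp_pinj (comp_pinj hf hg) ih

/-- peel from the back: f(gf)^{n+1} = f ∘ g ∘ (f(gf)^n) -/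
lemma iter_succ_elim {f g : Rel'} :
    ∀ n x y, iter f g (n + 1) x y → ∃ z w, iter f g n x z ∧ g z w ∧ f w y := by
  intro n
  induction n with
  | zero =>
    rintro x y ⟨v, ⟨u, hxu, huv⟩, hvy⟩
    exact ⟨u, v, hxu, huv, hvy⟩
  | succ n ih =>
    rintro x y ⟨v, hgf, hiter⟩
    obtain ⟨z, w, hz, hg1, hf1⟩ := ih v y hiter
    exact ⟨z, w, ⟨v, hgf, hz⟩, hg1, hf1⟩

lemma iter_dom_lemma {f g : Rel'} (i : ℕ) :
    ∀ k x y, iter f g (i + k + 1) x y → ∃ z, iter f g i x z ∧ z ∈ dom g := by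
  intro k
  induction k with
  | zero =>
    intro x y h
    obtain ⟨z, w, hz, hg1, _⟩ := iter_succ_elim i x y h
    exact ⟨z, hz, w, hg1⟩
  | succ k ih =>
    intro x y h
    obtain ⟨z, w, hz, _, _⟩ := iter_succ_elim (i + k + 1) x y h
    exact ih x z hz

lemma iter_cod_lemma {f g : Rel'} (i : ℕ) :
    ∀ k x y, iter f g (i + k + 1) x y → ∃ z, z ∈ cod g ∧ iter f g i z y := by
  intro k
  induction k with
  | zero =>
    rintro x y ⟨v, ⟨u, _, huv⟩, hiter⟩
    exact ⟨v, ⟨u, huv⟩, hiter⟩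
  | succ k ih =>
    rintro x y ⟨v, _, hiter⟩
    exact ih v y hiter

/-- well-definedness of Ex_n(f,g). -/
theorem ex_n_well_defined (f g : Rel') (A B C D : Set ℕ)
    (hf : IsPInj f) (hg : IsPInj g)
    (hdf : dom f = A ∪ B) (hcf : cod f = C ∪ D)
    (hAB : Disjoint A B) (hCD : Disjoint C D)
    (hdg : dom g = D) (hcg : cod g = B) (n : ℕ) :
    (∀ i j, i ≠ j →
      Disjoint (dom (restr (iter f g i) A C)) (dom (restr (iter f g j) A C))) ∧
    (∀ i j, i ≠ j →
      Disjoint (cod (restr (iter f g i) A C)) (cod (restr (iter f g j) A C))) ∧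
    IsPInj (Exn f g A C n) ∧ dom (Exn f g A C n) ⊆ A ∧ cod (Exn f g A C n) ⊆ C := by
  have hip : ∀ m, IsPInj (iter f g m) := iter_pinj hf hg
  -- domain disjointness for i < j
  have Hd : ∀ i j, i < j → ∀ x, x ∈ dom (restr (iter f g i) A C) →
      x ∉ dom (restr (iter f g j) A C) := by
    rintro i j hij x ⟨y, hy, _, hyC⟩ ⟨y', hy', _, _⟩
    have hj : j = i + (j - i - 1) + 1 := by omega
    rw [hj] at hy'
    obtain ⟨z, hz, hzg⟩ := iter_dom_lemma i (j - i - 1) x y' hy'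
    have hzy : z = y := (hip i).1 x z y hz hy
    have hzD : z ∈ D := by rw [← hdg]; exact hzg
    exact Set.disjoint_left.mp hCD hyC (hzy ▸ hzD)
  -- codomain disjointness for i < j
  have Hc : ∀ i j, i < j → ∀ y, y ∈ cod (restr (iter f g i) A C) →
      y ∉ cod (restr (iter f g j) A C) := by
    rintro i j hij y ⟨x, hx, hxA, _⟩ ⟨x', hx', hx'A, _⟩
    have hj : j = i + (j - i - 1) + 1 := by omega
    rw [hj] at hx'
    obtain ⟨z, hzg, hz⟩ := iter_cod_lemma i (j - i - 1) x' y hx'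
    have hzx : z = x := (hip i).2 z x y hz hx
    have hzB : z ∈ B := by rw [← hcg]; exact hzg
    exact Set.disjoint_left.mp hAB hxA (hzx ▸ hzB)
  have Hd' : ∀ i j, i ≠ j →
      Disjoint (dom (restr (iter f g i) A C)) (dom (restr (iter f g j) A C)) := by
    intro i j hij
    rcases lt_or_gt_of_ne hij with h | h
    · exact Set.disjoint_left.mpr (fun x hx => Hd i j h x hx)
    · exact (Set.disjoint_left.mpr (fun x hx => Hd j i h x hx)).symm
  have Hc' : ∀ i j, i ≠ j →
      Disjoint (cod (restr (iter f g i) A C)) (cod (restr (iter f g j) A C)) := by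
    intro i j hij
    rcases lt_or_gt_of_ne hij with h | h
    · exact Set.disjoint_left.mpr (fun y hy => Hc i j h y hy)
    · exact (Set.disjoint_left.mpr (fun y hy => Hc j i h y hy)).symm
  refine ⟨Hd', Hc', ⟨?_, ?_⟩, ?_, ?_⟩
  · rintro x y y' ⟨i, _, hi⟩ ⟨j, _, hj⟩
    by_cases hij : i = j
    · subst hij
      exact (hip i).1 x y y' hi.1 hj.1
    · exact absurd ⟨y', hj⟩ (Set.disjoint_left.mp (Hd' i j hij) ⟨y, hi⟩)
  · rintro x x' y ⟨i, _, hi⟩ ⟨j, _, hj⟩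
    by_cases hij : i = j
    · subst hij
      exact (hip i).2 x x' y hi.1 hj.1
    · exact absurd ⟨x', hj⟩ (Set.disjoint_left.mp (Hc' i j hij) ⟨x, hi⟩)
  · rintro x ⟨y, i, _, _, hxA, _⟩
    exact hxA
  · rintro y ⟨x, i, _, _, _, hyC⟩
    exact hyC

end IN
end

section
/- If f : A ⊎ B ↠ C ⊎ D is a partial injection with finite domain and g : D ↠ B is a partial injection, then the increasing sequence (Ex_n(f,g)) is eventually stationary and its limit Ex(f,g) is a partial injection with domain exactly A and codomain exactly C. -/
namespace IN

lemma iter_succ_iff (f g : Rel') (n x z : ℕ) :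
    iter f g (n+1) x z ↔ ∃ y w, iter f g n x y ∧ g y w ∧ f w z := by
  induction n generalizing x z with
  | zero =>
    constructor
    · rintro ⟨u, ⟨v, hv, hgv⟩, hit⟩
      exact ⟨v, u, hv, hgv, hit⟩
    · rintro ⟨y, w, h1, h2, h3⟩
      exact ⟨w, ⟨y, h1, h2⟩, h3⟩
  | succ n ih =>
    constructor
    · rintro ⟨u, hu, hit⟩
      rcases (ih u z).mp hit with ⟨y, w, h1, h2, h3⟩
      exact ⟨y, w, ⟨u, hu, h1⟩, h2, h3⟩
    · rintro ⟨y, w, ⟨u, hu, hin⟩, h2, h3⟩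
      exact ⟨u, hu, (ih u z).mpr ⟨y, w, hin, h2, h3⟩⟩

lemma fun_iter {f g : Rel'} (hf : ∀ x y y', f x y → f x y' → y = y')
    (hg : ∀ x y y', g x y → g x y' → y = y') :
    ∀ n x y y', iter f g n x y → iter f g n x y' → y = y' := by
  intro n
  induction n with
  | zero => exact hf
  | succ n ih =>
    rintro x y y' ⟨u, ⟨v, hv, hgv⟩, hit⟩ ⟨u', ⟨v', hv', hgv'⟩, hit'⟩
    obtain rfl := hf x v v' hv hv'
    obtain rfl := hg v u u' hgv hgv'
    exact ih u y y' hit hit'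

lemma iter_down (f g : Rel') : ∀ j i x y, iter f g j x y → i ≤ j → ∃ z, iter f g i x z := by
  intro j
  induction j with
  | zero =>
    intro i x y h hij
    obtain rfl := Nat.le_zero.mp hij
    exact ⟨y, h⟩
  | succ j ih =>
    intro i x y h hij
    rcases Nat.lt_or_ge i (j+1) with h1 | h1
    · rcases (iter_succ_iff f g j x y).mp h with ⟨u, w, hu, _, _⟩
      exact ih i x u hu (Nat.lt_succ_iff.mp h1)
    · obtain rfl : i = j+1 := le_antisymm hij h1
      exact ⟨y, h⟩

lemma iter_le {f g : Rel'} (hf : ∀ x y y', f x y → f x y' → y = y')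
    (hg : ∀ x y y', g x y → g x y' → y = y')
    {i j x y y'} (h1 : iter f g i x y) (hy : ∀ w, ¬ g y w)
    (h2 : iter f g j x y') : j ≤ i := by
  by_contra h
  push_neg at h
  obtain ⟨z, hz⟩ := iter_down f g j (i+1) x y' h2 h
  rcases (iter_succ_iff f g i x z).mp hz with ⟨y₁, w, hy₁, hgw, _⟩
  obtain rfl := fun_iter hf hg i x y₁ y hy₁ h1
  exact hy w hgw

lemma inv_iter (f g : Rel') : ∀ n x y, iter f g n x y ↔ iter (inv f) (inv g) n y x := by
  intro n
  induction n with
  | zero => intro x y; exact Iff.rfl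
  | succ n ih =>
    intro x z
    constructor
    · rintro ⟨u, ⟨v, hv, hgv⟩, hit⟩
      exact (iter_succ_iff _ _ n z x).mpr ⟨u, v, (ih u z).mp hit, hgv, hv⟩
    · intro h
      rcases (iter_succ_iff _ _ n z x).mp h with ⟨u, v, h1, h2, h3⟩
      exact ⟨u, ⟨v, h3, h2⟩, (ih u z).mpr h1⟩

lemma iter_cod {f g : Rel'} {n x y : ℕ} (h : iter f g n x y) : y ∈ cod f := by
  cases n with
  | zero => exact ⟨x, h⟩
  | succ n =>
    rcases (iter_succ_iff f g n x y).mp h with ⟨_, w, _, _, h3⟩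
    exact ⟨w, h3⟩

lemma finite_of_witness {S T : Set ℕ} (hT : T.Finite) (P : ℕ → ℕ → Prop)
    (hex : ∀ i ∈ S, ∃ x, P i x) (hmem : ∀ i x, P i x → x ∈ T)
    (huniq : ∀ i j x, i ∈ S → j ∈ S → P i x → P j x → i = j) : S.Finite := by
  classical
  let ψ : ℕ → ℕ := fun i => if h : ∃ x, P i x then h.choose else 0
  have hψ : ∀ i ∈ S, P i (ψ i) := by
    intro i hi
    obtain ⟨x, hx⟩ := hex i hi
    simp only [ψ]
    rw [dif_pos ⟨x, hx⟩]
    exact (⟨x, hx⟩ : ∃ x, P i x).choose_spec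
  apply Set.Finite.of_finite_image (f := ψ)
  · exact hT.subset (by rintro _ ⟨i, hi, rfl⟩; exact hmem i (ψ i) (hψ i hi))
  · intro i hi j hj hij
    exact huniq i j (ψ i) hi hj (hψ i hi) (hij ▸ hψ j hj)

lemma cod_finite {f : Rel'} (hf : ∀ x y y', f x y → f x y' → y = y')
    (h : (dom f).Finite) : (cod f).Finite :=
  finite_of_witness h (fun y x => f x y) (fun y hy => hy)
    (fun y x hx => ⟨y, hx⟩) (fun y y' x _ _ h1 h2 => hf x y y' h1 h2)

lemma iter_uniq {f g : Rel'} {C D : Set ℕ} (hf : IsPInj f) (hg : IsPInj g)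
    (hCD : Disjoint C D) (hdg : dom g = D)
    {i j x y y' : ℕ} (h1 : iter f g i x y) (hyC : y ∈ C)
    (h2 : iter f g j x y') (hy'C : y' ∈ C) : i = j ∧ y = y' := by
  have hnog : ∀ z ∈ C, ∀ w, ¬ g z w := by
    intro z hz w hw
    exact Set.disjoint_left.mp hCD hz (hdg ▸ (⟨w, hw⟩ : z ∈ dom g))
  have hij : i = j :=
    le_antisymm (iter_le hf.1 hg.1 h2 (hnog y' hy'C) h1)
      (iter_le hf.1 hg.1 h1 (hnog y hyC) h2)
  subst hij
  exact ⟨rfl, fun_iter hf.1 hg.1 i x y y' h1 h2⟩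

lemma iter_term {f g : Rel'} {A B C D : Set ℕ}
    (hf : IsPInj f) (hg : IsPInj g)
    (hdf : dom f = A ∪ B) (hcf : cod f = C ∪ D)
    (hAB : Disjoint A B) (hdg : dom g = D) (hcg : cod g = B)
    (hfin : (A ∪ B).Finite) :
    ∀ x ∈ A, ∃ i y, iter f g i x y ∧ y ∈ C := by
  intro x hxA
  have hcodfin : (cod f).Finite := cod_finite hf.1 (by rw [hdf]; exact hfin)
  have hf' : ∀ a b b', inv f a b → inv f a b' → b = b' := fun a b b' h h' => hf.2 b b' a h h'
  have hg' : ∀ a b b', inv g a b → inv g a b' → b = b' := fun a b b' h h' => hg.2 b b' a h h'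
  have hx : ∀ w, ¬ inv g x w := by
    intro w hw
    exact Set.disjoint_left.mp hAB hxA (hcg ▸ (⟨w, hw⟩ : x ∈ cod g))
  have huniq : ∀ i j y, iter f g i x y → iter f g j x y → i = j := by
    intro i j y h1 h2
    have h1' := (inv_iter f g i x y).mp h1
    have h2' := (inv_iter f g j x y).mp h2
    exact le_antisymm (iter_le hf' hg' h2' hx h1') (iter_le hf' hg' h1' hx h2')
  have hTfin : {i | ∃ y, iter f g i x y}.Finite :=
    finite_of_witness hcodfin (fun i y => iter f g i x y) (fun i hi => hi)
      (fun _ _ h => iter_cod h) (fun i j y _ _ h1 h2 => huniq i j y h1 h2)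
  have h0 : (0 : ℕ) ∈ {i | ∃ y, iter f g i x y} := by
    have : x ∈ dom f := by rw [hdf]; exact Or.inl hxA
    exact this
  obtain ⟨N, hN⟩ := hTfin.bddAbove
  have hKne : Set.Nonempty {i | ¬ ∃ y, iter f g i x y} := by
    refine ⟨N + 1, fun h => ?_⟩
    have := hN h
    omega
  set k := sInf {i | ¬ ∃ y, iter f g i x y} with hk
  have hkK : ¬ ∃ y, iter f g k x y := Nat.sInf_mem hKne
  have hk0 : k ≠ 0 := fun h => hkK (h ▸ h0)
  have hpred : (k - 1) ∉ {i | ¬ ∃ y, iter f g i x y} :=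
    Nat.notMem_of_lt_sInf (by omega)
  obtain ⟨y, hy⟩ := not_not.mp hpred
  have hycod : y ∈ C ∪ D := by rw [← hcf]; exact iter_cod hy
  rcases hycod with hC | hD
  · exact ⟨k - 1, y, hy, hC⟩
  · exfalso
    have hyg : y ∈ dom g := by rw [hdg]; exact hD
    obtain ⟨w, hw⟩ := hyg
    have hwB : w ∈ dom f := by rw [hdf]; exact Or.inr (hcg ▸ (⟨y, hw⟩ : w ∈ cod g))
    obtain ⟨z, hz⟩ := hwB
    have hit : iter f g (k - 1 + 1) x z :=
      (iter_succ_iff f g (k - 1) x z).mpr ⟨y, w, hy, hw, hz⟩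
    have hke : k - 1 + 1 = k := by omega
    rw [hke] at hit
    exact hkK ⟨z, hit⟩

/-- stationarity of (Ex_n) for finite domain, and Ex(f,g) : A ↠ C. -/
theorem ex_stationary (f g : Rel') (A B C D : Set ℕ)
    (hf : IsPInj f) (hg : IsPInj g)
    (hdf : dom f = A ∪ B) (hcf : cod f = C ∪ D)
    (hAB : Disjoint A B) (hCD : Disjoint C D)
    (hdg : dom g = D) (hcg : cod g = B)
    (hfin : (A ∪ B).Finite) :
    (∃ N, ∀ n, N ≤ n → Exn f g A C n = Exn f g A C N) ∧
    IsPInj (Ex f g A C) ∧ dom (Ex f g A C) = A ∧ cod (Ex f g A C) = C := by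
  have hf' : IsPInj (inv f) :=
    ⟨fun x y y' h h' => hf.2 y y' x h h', fun x x' y h h' => hf.1 y x x' h h'⟩
  have hg' : IsPInj (inv g) :=
    ⟨fun x y y' h h' => hg.2 y y' x h h', fun x x' y h h' => hg.1 y x x' h h'⟩
  have hdf' : dom (inv f) = C ∪ D := hcf
  have hcf' : cod (inv f) = A ∪ B := hdf
  have hdg' : dom (inv g) = B := hcg
  have hcg' : cod (inv g) = D := hdg
  have hfin' : (C ∪ D).Finite := by
    rw [← hcf]; exact cod_finite hf.1 (by rw [hdf]; exact hfin)
  refine ⟨?_, ⟨?_, ?_⟩, ?_, ?_⟩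
  · -- stationarity
    have hSfin : {i | ∃ x y, restr (iter f g i) A C x y}.Finite := by
      apply finite_of_witness (hfin.subset Set.subset_union_left)
        (fun i x => ∃ y, restr (iter f g i) A C x y)
      · exact fun i hi => hi
      · rintro i x ⟨y, _, hxA, _⟩; exact hxA
      · rintro i j x _ _ ⟨y, h1, _, hyC⟩ ⟨y', h2, _, hy'C⟩
        exact (iter_uniq hf hg hCD hdg h1 hyC h2 hy'C).1
    obtain ⟨N, hN⟩ := hSfin.bddAbove
    refine ⟨N, fun n hn => ?_⟩
    funext x y
    apply propext
    constructor
    · rintro ⟨i, _, hr⟩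
      exact ⟨i, hN (⟨x, y, hr⟩ : i ∈ {i | ∃ x y, restr (iter f g i) A C x y}), hr⟩
    · rintro ⟨i, hiN, hr⟩
      exact ⟨i, le_trans hiN hn, hr⟩
  · -- functionality
    rintro x y y' ⟨i, h1, _, hyC⟩ ⟨j, h2, _, hy'C⟩
    exact (iter_uniq hf hg hCD hdg h1 hyC h2 hy'C).2
  · -- injectivity
    rintro x x' y ⟨i, h1, hxA, _⟩ ⟨j, h2, hx'A, _⟩
    have h1' := (inv_iter f g i x y).mp h1
    have h2' := (inv_iter f g j x' y).mp h2
    exact (iter_uniq hf' hg' hAB hdg' h1' hxA h2' hx'A).2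
  · -- dom = A
    ext x
    constructor
    · rintro ⟨y, i, _, hxA, _⟩
      exact hxA
    · intro hxA
      obtain ⟨i, y, hit, hyC⟩ := iter_term hf hg hdf hcf hAB hdg hcg hfin x hxA
      exact ⟨y, i, hit, hxA, hyC⟩
  · -- cod = C
    ext y
    constructor
    · rintro ⟨x, i, _, _, hyC⟩
      exact hyC
    · intro hyC
      obtain ⟨i, x, hit', hxA⟩ := iter_term hf' hg' hdf' hcf' hCD hdg' hcg' hfin' y hyC
      exact ⟨x, i, (inv_iter f g i x y).mpr hit', hxA, hyC⟩


end IN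
end

section
/- In the proof of totality of execution: if f : A ⊎ B ↠ C ⊎ D with D finite, g : D ↠ B, and x ∈ A, then there exists k ∈ ℕ with (f(gf)^k)(x) ∈ C; i.e., the iteration starting from any element of A eventually exits D (otherwise some n < m would give (f(gf)^n)(x) = (f(gf)^m)(x), forcing x = (gf)^{m-n}(x) ∈ B, contradicting A ∩ B = ∅). -/
namespace IN

/-- (gf)^d as a relation, applied first. -/
def gfpow (f g : Rel') : ℕ → Rel'
  | 0 => fun x y => x = y
  | n + 1 => fun x z => ∃ y, comp g f x y ∧ gfpow f g n y z

lemma iter_add (f g : Rel') (d n : ℕ) :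
    ∀ x y, iter f g (d + n) x y ↔ ∃ z, gfpow f g d x z ∧ iter f g n z y := by
  induction d with
  | zero =>
    intro x y
    simp [gfpow]
  | succ d ih =>
    intro x y
    have h1 : d + 1 + n = (d + n) + 1 := by omega
    rw [h1]
    constructor
    · rintro ⟨a, hGF, hit⟩
      obtain ⟨z, hz, hit'⟩ := (ih a y).mp hit
      exact ⟨z, ⟨a, hGF, hz⟩, hit'⟩
    · rintro ⟨z, ⟨a, hGF, hz⟩, hit'⟩
      exact ⟨a, hGF, (ih a y).mpr ⟨z, hz, hit'⟩⟩

lemma iter_succ' (f g : Rel') (k : ℕ) :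
    ∀ x y, iter f g (k + 1) x y ↔ ∃ z w, iter f g k x z ∧ g z w ∧ f w y := by
  induction k with
  | zero =>
    intro x y
    constructor
    · rintro ⟨a, ⟨b, hfb, hgb⟩, hfa⟩
      exact ⟨b, a, hfb, hgb, hfa⟩
    · rintro ⟨z, w, hfz, hgz, hfw⟩
      exact ⟨w, ⟨z, hfz, hgz⟩, hfw⟩
  | succ k ih =>
    intro x y
    constructor
    · rintro ⟨a, hGF, hit⟩
      obtain ⟨z, w, hit', hg, hf⟩ := (ih a y).mp hit
      exact ⟨z, w, ⟨a, hGF, hit'⟩, hg, hf⟩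
    · rintro ⟨z, w, ⟨a, hGF, hit'⟩, hg, hf⟩
      exact ⟨a, hGF, (ih a y).mpr ⟨z, w, hit', hg, hf⟩⟩

lemma iter_inj (f g : Rel') (hf : IsPInj f) (hg : IsPInj g) (n : ℕ) :
    ∀ x x' y, iter f g n x y → iter f g n x' y → x = x' := by
  induction n with
  | zero => exact fun x x' y h h' => hf.2 x x' y h h'
  | succ n ih =>
    rintro x x' y ⟨a, ⟨b, hfb, hgb⟩, hit⟩ ⟨a', ⟨b', hfb', hgb'⟩, hit'⟩
    have ha : a = a' := ih a a' y hit hit'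
    subst ha
    have hb : b = b' := hg.2 b b' a hgb hgb'
    subst hb
    exact hf.2 x x' b hfb hfb'

lemma gfpow_cod (f g : Rel') (d : ℕ) :
    ∀ x z, gfpow f g (d + 1) x z → z ∈ cod g := by
  induction d with
  | zero =>
    rintro x z ⟨y, ⟨b, _, hgb⟩, hz⟩
    exact ⟨b, hz ▸ hgb⟩
  | succ d ih =>
    rintro x z ⟨y, _, hz⟩
    exact ih y z hz

/-- from any x ∈ A the iteration eventually exits D and lands in C. -/
theorem ex_totality (f g : Rel') (A B C D : Set ℕ)
    (hf : IsPInj f) (hg : IsPInj g)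
    (hdf : dom f = A ∪ B) (hcf : cod f = C ∪ D)
    (hAB : Disjoint A B) (hCD : Disjoint C D)
    (hdg : dom g = D) (hcg : cod g = B)
    (hDfin : D.Finite) :
    ∀ x ∈ A, ∃ (k : ℕ) (y : ℕ), y ∈ C ∧ iter f g k x y := by
  intro x hx
  by_contra hnone
  push_neg at hnone
  have key : ∀ k, ∃ y, y ∈ D ∧ iter f g k x y := by
    intro k
    induction k with
    | zero =>
      have hxd : x ∈ dom f := hdf ▸ Or.inl hx
      obtain ⟨y, hy⟩ := hxd
      have hyc : y ∈ C ∪ D := hcf ▸ ⟨x, hy⟩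
      rcases hyc with h | h
      · exact absurd hy (hnone 0 y h)
      · exact ⟨y, h, hy⟩
    | succ k ih =>
      obtain ⟨y, hyD, hit⟩ := ih
      have hydg : y ∈ dom g := hdg ▸ hyD
      obtain ⟨w, hgw⟩ := hydg
      have hwB : w ∈ B := hcg ▸ ⟨y, hgw⟩
      have hwdf : w ∈ dom f := hdf ▸ Or.inr hwB
      obtain ⟨y', hfy'⟩ := hwdf
      have hy'CD : y' ∈ C ∪ D := hcf ▸ ⟨w, hfy'⟩
      have hit' : iter f g (k + 1) x y' :=
        (iter_succ' f g k x y').mpr ⟨y, w, hit, hgw, hfy'⟩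
      rcases hy'CD with h | h
      · exact absurd hit' (hnone (k + 1) y' h)
      · exact ⟨y', h, hit'⟩
  choose h hD hiter using key
  have : Finite ↥D := hDfin.to_subtype
  obtain ⟨n, m, hnm, heq⟩ :=
    Finite.exists_ne_map_eq_of_infinite (fun k => (⟨h k, hD k⟩ : ↥D))
  have heq' : h n = h m := congrArg Subtype.val heq
  have contra : ∀ a b, a < b → h a = h b → False := by
    intro a b hab heqab
    have hn := hiter a
    have hm := hiter b
    rw [heqab] at hn
    obtain ⟨d, hd⟩ : ∃ d, b = (d + 1) + a := ⟨b - a - 1, by omega⟩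
    subst hd
    obtain ⟨z, hz, hit⟩ := (iter_add f g (d + 1) a x (h ((d + 1) + a))).mp hm
    have hxz : x = z := iter_inj f g hf hg a x z (h ((d + 1) + a)) hn hit
    subst hxz
    have hxB : x ∈ B := hcg ▸ gfpow_cod f g d x x hz
    exact Set.disjoint_left.mp hAB hx hxB
  rcases lt_or_gt_of_ne hnm with hlt | hlt
  · exact contra n m hlt heq'
  · exact contra m n hlt heq'.symm


end IN
end

section
/- Execution commutes with adding an independent partial injection: if f : A ⊎ B ↠ C ⊎ D, g : D ↠ B, and h is a partial injection with dom(h) ∩ dom(f) = ∅ and codom(h) ∩ codom(f) = ∅, then h + Ex(f,g) = Ex(f + h, g). -/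
namespace IN

/-- execution commutes with adding an independent partial injection. -/
theorem ex_sum (f g h : Rel') (A B C D : Set ℕ)
    (hf : IsPInj f) (hg : IsPInj g) (hh : IsPInj h)
    (hdf : dom f = A ∪ B) (hcf : cod f = C ∪ D)
    (hAB : Disjoint A B) (hCD : Disjoint C D)
    (hdg : dom g = D) (hcg : cod g = B)
    (hdh : Disjoint (dom h) (dom f)) (hch : Disjoint (cod h) (cod f)) :
    rsum h (Ex f g A C) = Ex (rsum f h) g (A ∪ dom h) (C ∪ cod h) := by
  have hdom : ∀ i x y, iter f g i x y → x ∈ dom f := by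
    intro i
    induction i with
    | zero => intro x y hxy; exact ⟨y, hxy⟩
    | succ n ih =>
      rintro x y ⟨z, ⟨w, hfw, hgw⟩, _⟩; exact ⟨w, hfw⟩
  have hcod : ∀ i x y, iter f g i x y → y ∈ cod f := by
    intro i
    induction i with
    | zero => intro x y hxy; exact ⟨x, hxy⟩
    | succ n ih => rintro x y ⟨z, _, hz⟩; exact ih z y hz
  have hiter : ∀ i x y, iter (rsum f h) g i x y ↔ (iter f g i x y ∨ (i = 0 ∧ h x y)) := by
    intro i
    induction i with
    | zero => intro x y; simp [iter, rsum]
    | succ n ih =>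
      intro x y
      constructor
      · rintro ⟨z, ⟨w, hfw | hhw, hgw⟩, hz⟩
        · rcases (ih z y).1 hz with hz' | ⟨rfl, hhz⟩
          · exact Or.inl ⟨z, ⟨w, hfw, hgw⟩, hz'⟩
          · exfalso
            have hz1 : z ∈ dom h := ⟨y, hhz⟩
            have hz2 : z ∈ dom f := by
              have : z ∈ cod g := ⟨w, hgw⟩
              rw [hcg] at this; rw [hdf]; exact Or.inr this
            exact Set.disjoint_left.mp hdh hz1 hz2
        · exfalso
          have hw1 : w ∈ cod h := ⟨x, hhw⟩
          have hw2 : w ∈ cod f := by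
            have : w ∈ dom g := ⟨z, hgw⟩
            rw [hdg] at this; rw [hcf]; exact Or.inr this
          exact Set.disjoint_left.mp hch hw1 hw2
      · rintro (⟨z, ⟨w, hfw, hgw⟩, hz⟩ | ⟨h0, _⟩)
        · exact ⟨z, ⟨w, Or.inl hfw, hgw⟩, (ih z y).2 (Or.inl hz)⟩
        · exact absurd h0 (Nat.succ_ne_zero n)
  funext x y
  apply propext
  constructor
  · rintro (hxy | ⟨i, hi, hA, hC⟩)
    · exact ⟨0, (hiter 0 x y).2 (Or.inr ⟨rfl, hxy⟩), ⟨Or.inr ⟨y, hxy⟩, Or.inr ⟨x, hxy⟩⟩⟩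
    · exact ⟨i, (hiter i x y).2 (Or.inl hi), ⟨Or.inl hA, Or.inl hC⟩⟩
  · rintro ⟨i, hi, hA', hC'⟩
    rcases (hiter i x y).1 hi with hi' | ⟨rfl, hxy⟩
    · refine Or.inr ⟨i, hi', ?_, ?_⟩
      · rcases hA' with hA | hdhx
        · exact hA
        · exact absurd (hdom i x y hi') (Set.disjoint_left.mp hdh hdhx)
      · rcases hC' with hC | hchy
        · exact hC
        · exact absurd (hcod i x y hi') (Set.disjoint_left.mp hch hchy)
    · exact Or.inl hxy

end IN
end

section
/- The domain of the Ex₀-composition: for w-permutations σ, τ with disjoint domains and a partial injection f with dom(f) ⊆ dom(σ), codom(f) ⊆ dom(τ), one has dom(σ ⋈_f τ) = (dom(σ) ∖ dom(f)) ⊎ (dom(τ) ∖ codom(f)). -/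
namespace IN

open Classical in
noncomputable def pfun (r : Rel') : ℕ → ℕ := fun x =>
  if h : ∃ y, r x y then h.choose else 0

lemma pfun_spec {r : Rel'} {x : ℕ} (h : x ∈ dom r) : r x (pfun r x) := by
  unfold pfun
  split
  · next h' => exact h'.choose_spec
  · next h' => exact absurd h h'

lemma total_aux (u g : Rel') (hu : IsPInj u) (hus : ∀ x y, u x y → u y x)
    (hg : IsPInj g) (hgs : ∀ x y, g x y → g y x) (hgu : dom g ⊆ dom u)
    (hfin : (dom u).Finite) (x : ℕ) (hx : x ∈ dom u) (hxg : x ∉ dom g) :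
    ∃ n y, iter u g n x y ∧ y ∈ dom u ∧ y ∉ dom g := by
  classical
  set F : ℕ → ℕ := fun z => pfun g (pfun u z) with hF
  have hgmem : ∀ w, w ∈ dom g → pfun g w ∈ dom g := fun w hw =>
    ⟨w, hgs _ _ (pfun_spec hw)⟩
  -- iter lemma, for any start
  have iterlem : ∀ n z, z ∈ dom u → (∀ k < n, pfun u (F^[k] z) ∈ dom g) →
      iter u g n z (pfun u (F^[n] z)) := by
    intro n
    induction n with
    | zero => intro z hz _; exact pfun_spec hz
    | succ n ih =>
      intro z hz hchain
      have h0 : pfun u z ∈ dom g := by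
        simpa using hchain 0 (Nat.succ_pos n)
      have hFz : F z ∈ dom u := hgu (hgmem _ h0)
      refine ⟨F z, ⟨pfun u z, pfun_spec hz, pfun_spec h0⟩, ?_⟩
      have := ih (F z) hFz (fun k hk => by
        rw [← Function.iterate_succ_apply]
        exact hchain (k + 1) (Nat.succ_lt_succ hk))
      rwa [← Function.iterate_succ_apply] at this
  by_cases hstop : ∃ n, pfun u (F^[n] x) ∉ dom g
  · -- take the least such n
    set N := Nat.find hstop with hN
    have hchain : ∀ k < N, pfun u (F^[k] x) ∈ dom g := fun k hk => by
      have := Nat.find_min hstop hk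
      simpa using this
    have memdom : ∀ n, (∀ k < n, pfun u (F^[k] x) ∈ dom g) → F^[n] x ∈ dom u := by
      intro n
      induction n with
      | zero => intro _; exact hx
      | succ n ih =>
        intro h
        rw [Function.iterate_succ_apply']
        exact hgu (hgmem _ (h n (Nat.lt_succ_self n)))
    have hmem : F^[N] x ∈ dom u := memdom N hchain
    refine ⟨N, pfun u (F^[N] x), iterlem N x hx hchain, ?_, Nat.find_spec hstop⟩
    exact ⟨F^[N] x, hus _ _ (pfun_spec hmem)⟩
  · exfalso
    push_neg at hstop
    set b : ℕ → ℕ := fun n => pfun u (F^[n] x) with hb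
    have hall : ∀ n, b n ∈ dom g := hstop
    have hFg : ∀ m, F^[m + 1] x ∈ dom g := by
      intro m
      rw [Function.iterate_succ_apply']
      exact hgmem _ (hall m)
    have memdom : ∀ n, F^[n] x ∈ dom u := by
      intro n
      cases n with
      | zero => exact hx
      | succ m => exact hgu (hFg m)
    have hFeq : ∀ m, F^[m + 1] x = pfun g (b m) := by
      intro m
      rw [Function.iterate_succ_apply']
    have key : ∀ i j, b i = b j → i = j := by
      intro i
      induction i with
      | zero =>
        intro j h
        cases j with
        | zero => rfl
        | succ m =>
          exfalso
          have h1 : u x (b 0) := pfun_spec hx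
          have h2 : u (F^[m + 1] x) (b (m + 1)) := pfun_spec (memdom (m + 1))
          have hxx : x = F^[m + 1] x := hu.2 _ _ _ h1 (h ▸ h2)
          exact hxg (hxx ▸ hFg m)
      | succ m ih =>
        intro j h
        cases j with
        | zero =>
          exfalso
          have h1 : u x (b 0) := pfun_spec hx
          have h2 : u (F^[m + 1] x) (b (m + 1)) := pfun_spec (memdom (m + 1))
          have hxx : x = F^[m + 1] x := hu.2 _ _ _ h1 (h.symm ▸ h2)
          exact hxg (hxx ▸ hFg m)
        | succ l =>
          have h2 : u (F^[m + 1] x) (b (m + 1)) := pfun_spec (memdom (m + 1))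
          have h3 : u (F^[l + 1] x) (b (l + 1)) := pfun_spec (memdom (l + 1))
          have hxx : F^[m + 1] x = F^[l + 1] x := hu.2 _ _ _ h2 (h ▸ h3)
          rw [hFeq m, hFeq l] at hxx
          have hbm : g (b m) (pfun g (b m)) := pfun_spec (hall m)
          have hbl : g (b l) (pfun g (b l)) := pfun_spec (hall l)
          have : b m = b l := hg.2 _ _ _ hbm (hxx ▸ hbl)
          rw [ih l this]
    have hinf : (Set.range b).Infinite :=
      Set.infinite_range_of_injective (fun i j => key i j)
    exact hinf (hfin.subset (by rintro _ ⟨n, rfl⟩; exact hgu (hall n)))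

/-- domain of the Ex₀-composition. -/
theorem cexec_dom (σ τ f : Rel')
    (hσ : IsWPerm σ) (hτ : IsWPerm τ) (hd : Disjoint (dom σ) (dom τ))
    (hf : IsPInj f) (hdf : dom f ⊆ dom σ) (hcf : cod f ⊆ dom τ) :
    dom (cexec σ τ f) = (dom σ \ dom f) ∪ (dom τ \ cod f) := by
  classical
  set u : Rel' := rsum σ τ with hu'
  set g : Rel' := rsum f (inv f) with hg'
  have domu : dom u = dom σ ∪ dom τ := by
    ext z
    constructor
    · rintro ⟨y, h | h⟩
      · exact Or.inl ⟨y, h⟩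
      · exact Or.inr ⟨y, h⟩
    · rintro (⟨y, h⟩ | ⟨y, h⟩)
      · exact ⟨y, Or.inl h⟩
      · exact ⟨y, Or.inr h⟩
  have domg : dom g = dom f ∪ cod f := by
    ext z
    constructor
    · rintro ⟨y, h | h⟩
      · exact Or.inl ⟨y, h⟩
      · exact Or.inr ⟨y, h⟩
    · rintro (⟨y, h⟩ | ⟨y, h⟩)
      · exact ⟨y, Or.inl h⟩
      · exact ⟨y, Or.inr h⟩
  have hdisj : ∀ z, z ∈ dom σ → z ∈ dom τ → False := fun z h1 h2 =>
    Set.disjoint_left.mp hd h1 h2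
  have hu : IsPInj u := by
    constructor
    · rintro z y y' (h | h) (h' | h')
      · exact hσ.1.1 _ _ _ h h'
      · exact absurd ⟨y', h'⟩ (fun hh => hdisj z ⟨y, h⟩ hh)
      · exact absurd ⟨y', h'⟩ (fun hh => hdisj z hh ⟨y, h⟩)
      · exact hτ.1.1 _ _ _ h h'
    · rintro z z' y (h | h) (h' | h')
      · exact hσ.1.2 _ _ _ h h'
      · exact absurd ⟨z', hτ.2.1 _ _ h'⟩ (fun hh => hdisj y ⟨z, hσ.2.1 _ _ h⟩ hh)
      · exact absurd ⟨z', hσ.2.1 _ _ h'⟩ (fun hh => hdisj y hh ⟨z, hτ.2.1 _ _ h⟩)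
      · exact hτ.1.2 _ _ _ h h'
  have hus : ∀ z y, u z y → u y z := by
    rintro z y (h | h)
    · exact Or.inl (hσ.2.1 _ _ h)
    · exact Or.inr (hτ.2.1 _ _ h)
  have hfdisj : ∀ z, z ∈ dom f → z ∈ cod f → False := fun z h1 h2 =>
    hdisj z (hdf h1) (hcf h2)
  have hg : IsPInj g := by
    constructor
    · rintro z y y' (h | h) (h' | h')
      · exact hf.1 _ _ _ h h'
      · exact absurd ⟨y', h'⟩ (fun hh => hfdisj z ⟨y, h⟩ hh)
      · exact absurd ⟨y', h'⟩ (fun hh => hfdisj z hh ⟨y, h⟩)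
      · exact hf.2 _ _ _ h h'
    · rintro z z' y (h | h) (h' | h')
      · exact hf.2 _ _ _ h h'
      · exact (hfdisj y ⟨z', h'⟩ ⟨z, h⟩).elim
      · exact (hfdisj y ⟨z, h⟩ ⟨z', h'⟩).elim
      · exact hf.1 _ _ _ h h'
  have hgs : ∀ z y, g z y → g y z := by
    rintro z y (h | h)
    · exact Or.inr h
    · exact Or.inl h
  have hgu : dom g ⊆ dom u := by
    rw [domg, domu]
    exact Set.union_subset_union hdf hcf
  have hfin : (dom u).Finite := domu ▸ (hσ.2.2.union hτ.2.2)
  have hA : (dom σ ∪ dom τ) \ (dom f ∪ cod f) = dom u \ dom g := by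
    rw [domu, domg]
  have hAeq : dom u \ dom g = (dom σ \ dom f) ∪ (dom τ \ cod f) := by
    rw [domu, domg]
    ext z
    constructor
    · rintro ⟨h1 | h1, h2⟩
      · exact Or.inl ⟨h1, fun hc => h2 (Or.inl hc)⟩
      · exact Or.inr ⟨h1, fun hc => h2 (Or.inr hc)⟩
    · rintro (⟨h1, h2⟩ | ⟨h1, h2⟩)
      · exact ⟨Or.inl h1, fun hc => hc.elim h2 (fun hc => hdisj z h1 (hcf hc))⟩
      · exact ⟨Or.inr h1, fun hc => hc.elim (fun hc => hdisj z (hdf hc) h1) h2⟩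
  ext x
  constructor
  · rintro ⟨y, i, _, hxA, _⟩
    rw [hA, hAeq] at hxA
    exact hxA
  · intro hx
    rw [← hAeq] at hx
    obtain ⟨n, y, hiter, hyu, hyg⟩ :=
      total_aux u g hu hus hg hgs hgu hfin x hx.1 hx.2
    exact ⟨y, n, hiter, hA ▸ hx, hA ▸ (⟨hyu, hyg⟩ : y ∈ dom u \ dom g)⟩

end IN
end

section
/- Associativity of Ex₀-composition in the case h = 0: for pairwise disjoint w-permutations σ, τ, ρ and partial injections f (from free part of σ to τ) and g (from free part of σ to ρ) with disjoint domains contained in dom(σ) and codomains contained in dom(τ) and dom(ρ) respectively, one has σ ⋈_{f+g} (τ + ρ) = (σ ⋈_f τ) ⋈_g ρ = (σ ⋈_g ρ) ⋈_f τ, where ⋈ is the Ex₀-composition. -/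
namespace IN

section Helpers
variable (u h : Rel')

lemma iter_front {n : ℕ} {x y : ℕ} :
    iter u h (n+1) x y ↔ ∃ a b, u x a ∧ h a b ∧ iter u h n b y := by
  constructor
  · rintro ⟨b, ⟨a, hxa, hab⟩, hby⟩; exact ⟨a, b, hxa, hab, hby⟩
  · rintro ⟨a, b, hxa, hab, hby⟩; exact ⟨b, ⟨a, hxa, hab⟩, hby⟩

lemma iter_mono {u' h' : Rel'} (hu : ∀ x y, u x y → u' x y) (hh : ∀ x y, h x y → h' x y) :
    ∀ n x y, iter u h n x y → iter u' h' n x y := by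
  intro n
  induction n with
  | zero => intro x y hxy; exact hu x y hxy
  | succ n IH =>
    intro x y hxy
    rcases (iter_front u h).mp hxy with ⟨a, b, hxa, hab, hby⟩
    exact (iter_front u' h').mpr ⟨a, b, hu _ _ hxa, hh _ _ hab, IH _ _ hby⟩

lemma iter_glue : ∀ n x z, iter u h n x z → ∀ m w y, h z w → iter u h m w y →
    ∃ k, iter u h k x y := by
  intro n
  induction n with
  | zero =>
    intro x z hxz m w y hzw hwy
    exact ⟨m + 1, (iter_front u h).mpr ⟨z, w, hxz, hzw, hwy⟩⟩
  | succ n IH =>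
    intro x z hxz m w y hzw hwy
    rcases (iter_front u h).mp hxz with ⟨a, b, hxa, hab, hbz⟩
    obtain ⟨k, hk⟩ := IH b z hbz m w y hzw hwy
    exact ⟨k + 1, (iter_front u h).mpr ⟨a, b, hxa, hab, hk⟩⟩

lemma iter_snoc : ∀ n x z w y, iter u h n x z → h z w → u w y → iter u h (n+1) x y := by
  intro n
  induction n with
  | zero =>
    intro x z w y hxz hzw hwy
    exact (iter_front u h).mpr ⟨z, w, hxz, hzw, hwy⟩
  | succ n IH =>
    intro x z w y hxz hzw hwy
    rcases (iter_front u h).mp hxz with ⟨a, b, hxa, hab, hbz⟩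
    exact (iter_front u h).mpr ⟨a, b, hxa, hab, IH b z w y hbz hzw hwy⟩

lemma iter_symm (hu : ∀ x y, u x y → u y x) (hh : ∀ x y, h x y → h y x) :
    ∀ n x y, iter u h n x y → iter u h n y x := by
  intro n
  induction n with
  | zero => intro x y hxy; exact hu x y hxy
  | succ n IH =>
    intro x y hxy
    rcases (iter_front u h).mp hxy with ⟨a, b, hxa, hab, hby⟩
    exact iter_snoc u h n y b a x (IH b y hby) (hh a b hab) (hu x a hxa)

lemma iter_dom : ∀ n x y, iter u h n x y → ∃ a, u x a := by
  intro n
  cases n with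
  | zero => intro x y hxy; exact ⟨y, hxy⟩
  | succ n =>
    intro x y hxy
    rcases (iter_front u h).mp hxy with ⟨a, _, hxa, _⟩
    exact ⟨a, hxa⟩

end Helpers



lemma cexec_symm (σ τ f : Rel') (hσs : ∀ x y, σ x y → σ y x) (hτs : ∀ x y, τ x y → τ y x) :
    ∀ x y, cexec σ τ f x y → cexec σ τ f y x := by
  rintro x y ⟨i, hi, hx, hy⟩
  refine ⟨i, ?_, hy, hx⟩
  refine iter_symm _ _ ?_ ?_ i x y hi
  · rintro a b (h | h)
    · exact Or.inl (hσs a b h)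
    · exact Or.inr (hτs a b h)
  · rintro a b (h | h)
    · exact Or.inr h
    · exact Or.inl h

lemma st_dom (σ τ : Rel') (hσs : ∀ x y, σ x y → σ y x) (hτs : ∀ x y, τ x y → τ y x)
    (n : ℕ) (x y : ℕ) (hit : iter (rsum σ τ) (rsum f (inv f)) n x y) :
    x ∈ dom σ ∪ dom τ := by
  obtain ⟨a, ha⟩ := iter_dom _ _ n x y hit
  rcases ha with h | h
  · exact Or.inl ⟨a, h⟩
  · exact Or.inr ⟨a, h⟩

lemma blockC (σ τ ρ f g : Rel')
    (hσs : ∀ x y, σ x y → σ y x) (hτs : ∀ x y, τ x y → τ y x)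
    (hστ : ∀ x, x ∈ dom σ → x ∈ dom τ → False)
    (hσρ : ∀ x, x ∈ dom σ → x ∈ dom ρ → False)
    (hτρ : ∀ x, x ∈ dom τ → x ∈ dom ρ → False)
    (hdf : dom f ⊆ dom σ) (hcf : cod f ⊆ dom τ)
    (hcg : cod g ⊆ dom ρ) :
    ∀ n x y, iter (rsum σ (rsum τ ρ)) (rsum (rsum f g) (inv (rsum f g))) n x y →
      (x ∈ dom σ ∨ x ∈ dom τ) →
      iter (rsum σ τ) (rsum f (inv f)) n x y ∨
      ∃ j k z w, n = j + k + 1 ∧ iter (rsum σ τ) (rsum f (inv f)) j x z ∧ g z w ∧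
        iter (rsum σ (rsum τ ρ)) (rsum (rsum f g) (inv (rsum f g))) k w y := by
  intro n
  induction n with
  | zero =>
    intro x y hit hx
    have hit' : σ x y ∨ τ x y ∨ ρ x y := hit
    rcases hit' with h | h | h
    · exact Or.inl (Or.inl h)
    · exact Or.inl (Or.inr h)
    · rcases hx with hx | hx
      · exact absurd (hσρ x hx ⟨y, h⟩) not_false
      · exact absurd (hτρ x hx ⟨y, h⟩) not_false
  | succ n IH =>
    intro x y hit hx
    rcases (iter_front _ _).mp hit with ⟨a, b, hxa, hab, hby⟩
    have hxa' : σ x a ∨ τ x a ∨ ρ x a := hxa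
    have hxa2 : rsum σ τ x a := by
      rcases hxa' with h | h | h
      · exact Or.inl h
      · exact Or.inr h
      · rcases hx with hx | hx
        · exact absurd (hσρ x hx ⟨a, h⟩) not_false
        · exact absurd (hτρ x hx ⟨a, h⟩) not_false
    have haστ : a ∈ dom σ ∨ a ∈ dom τ := by
      rcases hxa2 with h | h
      · exact Or.inl ⟨x, hσs x a h⟩
      · exact Or.inr ⟨x, hτs x a h⟩
    have hab' : (f a b ∨ g a b) ∨ (f b a ∨ g b a) := hab
    rcases hab' with (hf1 | hg1) | (hf2 | hg2)
    · -- f a b : continue the σ/τ block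
      have hbστ : b ∈ dom σ ∨ b ∈ dom τ := Or.inr (hcf ⟨a, hf1⟩)
      rcases IH b y hby hbστ with hfull | ⟨j, k, z, w, hn, hj, hzw, hk⟩
      · exact Or.inl ((iter_front _ _).mpr ⟨a, b, hxa2, Or.inl hf1, hfull⟩)
      · exact Or.inr ⟨j + 1, k, z, w, by omega,
          (iter_front _ _).mpr ⟨a, b, hxa2, Or.inl hf1, hj⟩, hzw, hk⟩
    · -- g a b : block break
      exact Or.inr ⟨0, n, a, b, by omega, hxa2, hg1, hby⟩
    · -- f b a : continue
      have hbστ : b ∈ dom σ ∨ b ∈ dom τ := Or.inl (hdf ⟨a, hf2⟩)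
      rcases IH b y hby hbστ with hfull | ⟨j, k, z, w, hn, hj, hzw, hk⟩
      · exact Or.inl ((iter_front _ _).mpr ⟨a, b, hxa2, Or.inr hf2, hfull⟩)
      · exact Or.inr ⟨j + 1, k, z, w, by omega,
          (iter_front _ _).mpr ⟨a, b, hxa2, Or.inr hf2, hj⟩, hzw, hk⟩
    · -- g b a : impossible, a ∈ cod g ⊆ dom ρ
      have haρ : a ∈ dom ρ := hcg ⟨b, hg2⟩
      rcases haστ with h | h
      · exact absurd (hσρ a h haρ) not_false
      · exact absurd (hτρ a h haρ) not_false


lemma toComposed (σ τ ρ f g : Rel')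
    (hσs : ∀ x y, σ x y → σ y x) (hτs : ∀ x y, τ x y → τ y x) (hρs : ∀ x y, ρ x y → ρ y x)
    (hστ : ∀ x, x ∈ dom σ → x ∈ dom τ → False)
    (hσρ : ∀ x, x ∈ dom σ → x ∈ dom ρ → False)
    (hτρ : ∀ x, x ∈ dom τ → x ∈ dom ρ → False)
    (hdf : dom f ⊆ dom σ) (hcf : cod f ⊆ dom τ)
    (hdg : dom g ⊆ dom σ) (hcg : cod g ⊆ dom ρ)
    (hfg : ∀ x, x ∈ dom f → x ∈ dom g → False) :
    ∀ n x y, iter (rsum σ (rsum τ ρ)) (rsum (rsum f g) (inv (rsum f g))) n x y →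
      x ∉ dom f → x ∉ cod f → y ∉ dom f → y ∉ cod f →
      ∃ m, iter (rsum (cexec σ τ f) ρ) (rsum g (inv g)) m x y := by
  intro n
  induction n using Nat.strong_induction_on with
  | _ n IH =>
    intro x y hit hx1 hx2 hy1 hy2
    obtain ⟨a0, ha0⟩ := iter_dom _ _ n x y hit
    have ha0' : σ x a0 ∨ τ x a0 ∨ ρ x a0 := ha0
    have main_st : (x ∈ dom σ ∨ x ∈ dom τ) → ∃ m,
        iter (rsum (cexec σ τ f) ρ) (rsum g (inv g)) m x y := by
      intro hx
      rcases blockC σ τ ρ f g hσs hτs hστ hσρ hτρ hdf hcf hcg n x y hit hx with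
        hfull | ⟨j, k, z, w, hn, hj, hzw, hk⟩
      · -- the whole path is a single π-step
        have hyst : y ∈ dom σ ∪ dom τ := by
          have hrev := iter_symm (rsum σ τ) (rsum f (inv f))
            (by rintro a b (h | h); exact Or.inl (hσs a b h); exact Or.inr (hτs a b h))
            (by rintro a b (h | h); exact Or.inr h; exact Or.inl h) n x y hfull
          exact st_dom σ τ hσs hτs n y x hrev
        have hπ : cexec σ τ f x y := by
          refine ⟨n, hfull, ⟨?_, ?_⟩, ⟨hyst, ?_⟩⟩
          · exact hx
          · rintro (h | h)
            · exact hx1 h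
            · exact hx2 h
          · rintro (h | h)
            · exact hy1 h
            · exact hy2 h
        exact ⟨0, Or.inl hπ⟩
      · -- block break at g z w
        have hzg : z ∈ dom g := ⟨w, hzw⟩
        have hzσ : z ∈ dom σ := hdg hzg
        have hzst : z ∈ dom σ ∪ dom τ := Or.inl hzσ
        have hz1 : z ∉ dom f := fun hc => hfg z hc hzg
        have hz2 : z ∉ cod f := fun hc => hστ z hzσ (hcf hc)
        have hπ : cexec σ τ f x z := by
          refine ⟨j, hj, ⟨hx, ?_⟩, ⟨hzst, ?_⟩⟩
          · rintro (h | h)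
            · exact hx1 h
            · exact hx2 h
          · rintro (h | h)
            · exact hz1 h
            · exact hz2 h
        have hwρ : w ∈ dom ρ := hcg ⟨z, hzw⟩
        have hw1 : w ∉ dom f := fun hc => hσρ w (hdf hc) hwρ
        have hw2 : w ∉ cod f := fun hc => hτρ w (hcf hc) hwρ
        obtain ⟨m, hm⟩ := IH k (by omega) w y hk hw1 hw2 hy1 hy2
        exact ⟨m + 1, (iter_front _ _).mpr ⟨z, w, Or.inl hπ, Or.inl hzw, hm⟩⟩
    rcases ha0' with h | h | h
    · exact main_st (Or.inl ⟨a0, h⟩)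
    · exact main_st (Or.inr ⟨a0, h⟩)
    · -- x ∈ dom ρ
      have hxρ : x ∈ dom ρ := ⟨a0, h⟩
      cases n with
      | zero =>
        have hit' : σ x y ∨ τ x y ∨ ρ x y := hit
        rcases hit' with h' | h' | h'
        · exact absurd (hσρ x ⟨y, h'⟩ hxρ) not_false
        · exact absurd (hτρ x ⟨y, h'⟩ hxρ) not_false
        · exact ⟨0, Or.inr h'⟩
      | succ k =>
        rcases (iter_front _ _).mp hit with ⟨a, b, hxa, hab, hby⟩
        have hxa' : σ x a ∨ τ x a ∨ ρ x a := hxa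
        have hxaρ : ρ x a := by
          rcases hxa' with h' | h' | h'
          · exact absurd (hσρ x ⟨a, h'⟩ hxρ) not_false
          · exact absurd (hτρ x ⟨a, h'⟩ hxρ) not_false
          · exact h'
        have haρ : a ∈ dom ρ := ⟨x, hρs x a hxaρ⟩
        have hab' : (f a b ∨ g a b) ∨ (f b a ∨ g b a) := hab
        have hgba : g b a := by
          rcases hab' with (h' | h') | (h' | h')
          · exact absurd (hσρ a (hdf ⟨b, h'⟩) haρ) not_false
          · exact absurd (hσρ a (hdg ⟨b, h'⟩) haρ) not_false
          · exact absurd (hτρ a (hcf ⟨b, h'⟩) haρ) not_false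
          · exact h'
        have hbσ : b ∈ dom σ := hdg ⟨a, hgba⟩
        have hb1 : b ∉ dom f := fun hc => hfg b hc ⟨a, hgba⟩
        have hb2 : b ∉ cod f := fun hc => hστ b hbσ (hcf hc)
        obtain ⟨m, hm⟩ := IH k (by omega) b y hby hb1 hb2 hy1 hy2
        exact ⟨m + 1, (iter_front _ _).mpr ⟨a, b, Or.inr hxaρ, Or.inr hgba, hm⟩⟩

lemma fromComposed (σ τ ρ f g : Rel') :
    ∀ m x y, iter (rsum (cexec σ τ f) ρ) (rsum g (inv g)) m x y →
      ∃ n, iter (rsum σ (rsum τ ρ)) (rsum (rsum f g) (inv (rsum f g))) n x y := by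
  have embU : ∀ x y, rsum σ τ x y → rsum σ (rsum τ ρ) x y := by
    rintro x y (h | h)
    · exact Or.inl h
    · exact Or.inr (Or.inl h)
  have embH : ∀ x y, rsum f (inv f) x y → rsum (rsum f g) (inv (rsum f g)) x y := by
    rintro x y (h | h)
    · exact Or.inl (Or.inl h)
    · exact Or.inr (Or.inl h)
  have embπ : ∀ x y, cexec σ τ f x y →
      ∃ n, iter (rsum σ (rsum τ ρ)) (rsum (rsum f g) (inv (rsum f g))) n x y := by
    rintro x y ⟨i, hi, _, _⟩
    exact ⟨i, iter_mono _ _ embU embH i x y hi⟩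
  intro m
  induction m with
  | zero =>
    intro x y hxy
    have hxy' : cexec σ τ f x y ∨ ρ x y := hxy
    rcases hxy' with h | h
    · exact embπ x y h
    · exact ⟨0, Or.inr (Or.inr h)⟩
  | succ m IH =>
    intro x y hxy
    rcases (iter_front _ _).mp hxy with ⟨a, b, hxa, hab, hby⟩
    obtain ⟨n', hn'⟩ := IH b y hby
    have habH : rsum (rsum f g) (inv (rsum f g)) a b := by
      rcases hab with h | h
      · exact Or.inl (Or.inr h)
      · exact Or.inr (Or.inr h)
    rcases hxa with h | h
    · obtain ⟨i, hi⟩ := embπ x a h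
      exact iter_glue _ _ i x a hi n' b y habH hn'
    · have h0 : iter (rsum σ (rsum τ ρ)) (rsum (rsum f g) (inv (rsum f g))) 0 x a :=
        Or.inr (Or.inr h)
      exact iter_glue _ _ 0 x a h0 n' b y habH hn'


lemma rsum_comm (a b : Rel') : rsum a b = rsum b a := by
  funext x y
  exact propext or_comm

lemma cexec_split (σ τ ρ f g : Rel')
    (hσs : ∀ x y, σ x y → σ y x) (hτs : ∀ x y, τ x y → τ y x) (hρs : ∀ x y, ρ x y → ρ y x)
    (hστ : ∀ x, x ∈ dom σ → x ∈ dom τ → False)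
    (hσρ : ∀ x, x ∈ dom σ → x ∈ dom ρ → False)
    (hτρ : ∀ x, x ∈ dom τ → x ∈ dom ρ → False)
    (hdf : dom f ⊆ dom σ) (hcf : cod f ⊆ dom τ)
    (hdg : dom g ⊆ dom σ) (hcg : cod g ⊆ dom ρ)
    (hfg : ∀ x, x ∈ dom f → x ∈ dom g → False) :
    cexec σ (rsum τ ρ) (rsum f g) = cexec (cexec σ τ f) ρ g := by
  funext x y
  apply propext
  constructor
  · rintro ⟨n, hit, hxA, hyA⟩
    have hx1 : x ∉ dom f := fun ⟨c, hc⟩ => hxA.2 (Or.inl ⟨c, Or.inl hc⟩)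
    have hx2 : x ∉ cod f := fun ⟨c, hc⟩ => hxA.2 (Or.inr ⟨c, Or.inl hc⟩)
    have hx3 : x ∉ dom g := fun ⟨c, hc⟩ => hxA.2 (Or.inl ⟨c, Or.inr hc⟩)
    have hx4 : x ∉ cod g := fun ⟨c, hc⟩ => hxA.2 (Or.inr ⟨c, Or.inr hc⟩)
    have hy1 : y ∉ dom f := fun ⟨c, hc⟩ => hyA.2 (Or.inl ⟨c, Or.inl hc⟩)
    have hy2 : y ∉ cod f := fun ⟨c, hc⟩ => hyA.2 (Or.inr ⟨c, Or.inl hc⟩)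
    have hy3 : y ∉ dom g := fun ⟨c, hc⟩ => hyA.2 (Or.inl ⟨c, Or.inr hc⟩)
    have hy4 : y ∉ cod g := fun ⟨c, hc⟩ => hyA.2 (Or.inr ⟨c, Or.inr hc⟩)
    obtain ⟨m, hm⟩ := toComposed σ τ ρ f g hσs hτs hρs hστ hσρ hτρ hdf hcf hdg hcg hfg
      n x y hit hx1 hx2 hy1 hy2
    have hPsymm : ∀ a b, rsum (cexec σ τ f) ρ a b → rsum (cexec σ τ f) ρ b a := by
      rintro a b (h | h)
      · exact Or.inl (cexec_symm σ τ f hσs hτs a b h)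
      · exact Or.inr (hρs a b h)
    have hGsymm : ∀ a b, rsum g (inv g) a b → rsum g (inv g) b a := by
      rintro a b (h | h)
      · exact Or.inr h
      · exact Or.inl h
    have hxP : x ∈ dom (cexec σ τ f) ∪ dom ρ := by
      obtain ⟨a, ha⟩ := iter_dom _ _ m x y hm
      rcases ha with h | h
      · exact Or.inl ⟨a, h⟩
      · exact Or.inr ⟨a, h⟩
    have hyP : y ∈ dom (cexec σ τ f) ∪ dom ρ := by
      obtain ⟨a, ha⟩ := iter_dom _ _ m y x
        (iter_symm _ _ hPsymm hGsymm m x y hm)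
      rcases ha with h | h
      · exact Or.inl ⟨a, h⟩
      · exact Or.inr ⟨a, h⟩
    refine ⟨m, hm, ⟨hxP, ?_⟩, ⟨hyP, ?_⟩⟩
    · rintro (h | h)
      · exact hx3 h
      · exact hx4 h
    · rintro (h | h)
      · exact hy3 h
      · exact hy4 h
  · rintro ⟨m, hm, hxA, hyA⟩
    obtain ⟨n, hn⟩ := fromComposed σ τ ρ f g m x y hm
    have hmem : ∀ z : ℕ, z ∈ dom (cexec σ τ f) ∪ dom ρ → z ∉ dom g ∪ cod g →
        z ∈ (dom σ ∪ dom (rsum τ ρ)) \ (dom (rsum f g) ∪ cod (rsum f g)) := by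
      intro z hz hzg
      rcases hz with ⟨a, i, hi, hzAπ, haAπ⟩ | hzρ
      · refine ⟨?_, ?_⟩
        · rcases hzAπ.1 with h | h
          · exact Or.inl h
          · exact Or.inr ⟨h.choose, Or.inl h.choose_spec⟩
        · rintro (⟨c, hc | hc⟩ | ⟨c, hc | hc⟩)
          · exact hzAπ.2 (Or.inl ⟨c, hc⟩)
          · exact hzg (Or.inl ⟨c, hc⟩)
          · exact hzAπ.2 (Or.inr ⟨c, hc⟩)
          · exact hzg (Or.inr ⟨c, hc⟩)
      · refine ⟨Or.inr ⟨hzρ.choose, Or.inr hzρ.choose_spec⟩, ?_⟩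
        rintro (⟨c, hc | hc⟩ | ⟨c, hc | hc⟩)
        · exact hσρ z (hdf ⟨c, hc⟩) hzρ
        · exact hzg (Or.inl ⟨c, hc⟩)
        · exact hτρ z (hcf ⟨c, hc⟩) hzρ
        · exact hzg (Or.inr ⟨c, hc⟩)
    exact ⟨n, hn, hmem x hxA.1 hxA.2, hmem y hyA.1 hyA.2⟩


/-- associativity of Ex₀-composition in the case h = 0. -/
theorem cexec_assoc (σ τ ρ f g : Rel')
    (hσ : IsWPerm σ) (hτ : IsWPerm τ) (hρ : IsWPerm ρ)
    (hστ : Disjoint (dom σ) (dom τ)) (hσρ : Disjoint (dom σ) (dom ρ))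
    (hτρ : Disjoint (dom τ) (dom ρ))
    (hf : IsPInj f) (hdf : dom f ⊆ dom σ) (hcf : cod f ⊆ dom τ)
    (hg : IsPInj g) (hdg : dom g ⊆ dom σ) (hcg : cod g ⊆ dom ρ)
    (hfg : Disjoint (dom f) (dom g)) :
    cexec σ (rsum τ ρ) (rsum f g) = cexec (cexec σ τ f) ρ g ∧
    cexec (cexec σ τ f) ρ g = cexec (cexec σ ρ g) τ f := by
  have hσs := hσ.2.1
  have hτs := hτ.2.1
  have hρs := hρ.2.1
  have dστ : ∀ x, x ∈ dom σ → x ∈ dom τ → False :=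
    fun x h1 h2 => Set.disjoint_left.mp hστ h1 h2
  have dσρ : ∀ x, x ∈ dom σ → x ∈ dom ρ → False :=
    fun x h1 h2 => Set.disjoint_left.mp hσρ h1 h2
  have dτρ : ∀ x, x ∈ dom τ → x ∈ dom ρ → False :=
    fun x h1 h2 => Set.disjoint_left.mp hτρ h1 h2
  have dfg : ∀ x, x ∈ dom f → x ∈ dom g → False :=
    fun x h1 h2 => Set.disjoint_left.mp hfg h1 h2
  have h1 := cexec_split σ τ ρ f g hσs hτs hρs dστ dσρ dτρ hdf hcf hdg hcg dfg
  have h2 := cexec_split σ ρ τ g f hσs hρs hτs dσρ dστ (fun x ha hb => dτρ x hb ha)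
    hdg hcg hdf hcf (fun x ha hb => dfg x hb ha)
  refine ⟨h1, ?_⟩
  rw [← h1, ← h2, rsum_comm τ ρ, rsum_comm f g]

end IN
end

section
/- Extension of morphisms along gluing: if α : R → S is a morphism of interaction nets and T = S ⋈_f S', then there exists a morphism α̂ : R → T extending α, defined on cells as α and sending each wire (p p') of R either to the loop created from the wire (α(p) α(p')) in T, or to the wire of T obtained by composing (α(p) α(p')) with the chain of gluing steps in the Ex-composition. -/
namespace IN

/-! ## Interaction nets -/

/-- Iterate of a relation. -/
def iterRel (r : Rel') : ℕ → Rel'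
  | 0 => fun x y => x = y
  | n + 1 => comp r (iterRel r n)

/-- Step relation used to detect double orbits: apply σ+τ then f+f⋆. -/
def cstep (σ τ f : Rel') : Rel' := comp (rsum f (inv f)) (rsum σ τ)

/-- Representatives (minima) of double orbits of the Ex₀-composition. -/
def loopPts (σ τ f : Rel') : Set ℕ :=
  {x | (∃ n, 1 ≤ n ∧ iterRel (cstep σ τ f) n x x) ∧
       ∀ y, (∃ n, iterRel (cstep σ τ f) n x y) → x ≤ y}

/-- Full Ex-composition σ ⋈̂_f τ: the Ex₀-composition extended by a fixed
point for each double orbit (creating loops). -/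
def cexece (σ τ f : Rel') : Rel' :=
  fun x y => cexec σ τ f x y ∨ (x = y ∧ x ∈ loopPts σ τ f)

/-- Interaction net data: wire permutation, cell permutation, labelling
of cell ports by symbols, and pointing of principal ports. -/
structure PreNet (S : Type) where
  w : Rel'
  c : Rel'
  lbl : ℕ → Option S
  pal : ℕ → Prop

variable {S : Type}

def carrier (R : PreNet S) : Set ℕ := dom R.w
def netLoops (R : PreNet S) : Set ℕ := {x | R.w x x}
/-- Ports: non-fixed points of the wire permutation. -/
def ports (R : PreNet S) : Set ℕ := {x | x ∈ dom R.w ∧ ¬ R.w x x}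
/-- Cell ports. -/
def cports (R : PreNet S) : Set ℕ := dom R.c
/-- Free ports. -/
def fports (R : PreNet S) : Set ℕ := ports R \ cports R

/-- Orbit of a point under a partial permutation. -/
def orbit (c : Rel') (p : ℕ) : Set ℕ := {q | Relation.ReflTransGen c p q}

/-- Wellformedness of an interaction net over symbols with arity `ar`. -/
def IsNet (ar : S → ℕ) (R : PreNet S) : Prop :=
  IsWPerm R.w ∧
  IsPInj R.c ∧ dom R.c = cod R.c ∧ cports R ⊆ ports R ∧
  (∀ x, (R.lbl x).isSome ↔ x ∈ cports R) ∧
  (∀ x y, R.c x y → R.lbl x = R.lbl y) ∧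
  (∀ x, R.pal x → x ∈ cports R) ∧
  (∀ p ∈ cports R, ∃! q, q ∈ orbit R.c p ∧ R.pal q) ∧
  (∀ p ∈ cports R, ∀ s, R.lbl p = some s → (orbit R.c p).ncard = ar s + 1)

/-- Gluing of two nets along a partial injection between free ports. -/
def glue (R R' : PreNet S) (f : Rel') : PreNet S where
  w := cexece R.w R'.w f
  c := rsum R.c R'.c
  lbl := fun x => (R.lbl x).orElse (fun _ => R'.lbl x)
  pal := fun x => R.pal x ∨ R'.pal x

/-- Parallel (disjoint) sum of two nets. -/
def psum (R R' : PreNet S) : PreNet S where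
  w := rsum R.w R'.w
  c := rsum R.c R'.c
  lbl := fun x => (R.lbl x).orElse (fun _ => R'.lbl x)
  pal := fun x => R.pal x ∨ R'.pal x

/-- A valid gluing function from free ports of `R` to free ports of `R'`. -/
def IsGlueMap (f : Rel') (R R' : PreNet S) : Prop :=
  IsPInj f ∧ dom f ⊆ fports R ∧ cod f ⊆ fports R'

/-- The empty net. -/
def emptyNet : PreNet S := ⟨zero, zero, fun _ => none, fun _ => False⟩

/-- Subnet relation: R' ⊆ R iff R is a gluing of R' with some net. -/
def Subnet (ar : S → ℕ) (R' R : PreNet S) : Prop :=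
  ∃ (R'' : PreNet S) (f : Rel'),
    IsNet ar R'' ∧ Disjoint (carrier R') (carrier R'') ∧
    IsGlueMap f R' R'' ∧ R = glue R' R'' f

/-- Interface: a list of distinct free ports (the list order is the linear order). -/
def IsInterface (R : PreNet S) (I : List ℕ) : Prop :=
  I.Nodup ∧ ∀ x ∈ I, x ∈ fports R

/-- The chord: the order-preserving bijection between two interfaces. -/
def chordRel (I I' : List ℕ) : Rel' := fun x y => (x, y) ∈ I.zip I'
/-! ## Morphisms, renamings, rules, reduction -/

/-- Morphism of interaction nets. -/
def IsMorphism (F : ℕ → ℕ) (R R' : PreNet S) : Prop :=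
  (∀ x y, R.w x y → R'.w (F x) (F y)) ∧
  (∀ x, x ∈ cports R → F x ∈ cports R') ∧
  (∀ x y, R.c x y → R'.c (F x) (F y)) ∧
  (∀ x, R.pal x → R'.pal (F x)) ∧
  (∀ x, x ∈ cports R → R.lbl x = R'.lbl (F x))

/-- A renaming of a net: injective on its carrier. -/
def IsRenaming (e : ℕ → ℕ) (R : PreNet S) : Prop := Set.InjOn e (carrier R)

open Classical in
/-- Image of a net along a renaming. -/
noncomputable def rename (e : ℕ → ℕ) (R : PreNet S) : PreNet S where
  w := fun x y => ∃ a b, e a = x ∧ e b = y ∧ R.w a b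
  c := fun x y => ∃ a b, e a = x ∧ e b = y ∧ R.c a b
  lbl := fun x => if h : ∃ a, a ∈ carrier R ∧ e a = x then R.lbl h.choose else none
  pal := fun x => ∃ a, e a = x ∧ R.pal a

/-- Inclusion map of `R` into a net `T` obtained by gluing `R` along `f`:
a morphism fixing every port of `R` not consumed by `f`. -/
def IsInclusion (ι : ℕ → ℕ) (R : PreNet S) (f : Rel') (T : PreNet S) : Prop :=
  IsMorphism ι R T ∧ ∀ p ∈ ports R, p ∉ dom f → ι p = p

/-- Cyclic successor relation of a list: the cell permutation of one cell. -/
def cycleRel (l : List ℕ) : Rel' :=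
  fun x y => ∃ i : Fin l.length,
    l.get i = x ∧ l.get ⟨((i : ℕ) + 1) % l.length, Nat.mod_lt _ i.pos⟩ = y

/-- Symmetric wire relation generated by a list of unordered pairs. -/
def pairsRel (l : List (ℕ × ℕ)) : Rel' := fun x y => (x, y) ∈ l ∨ (y, x) ∈ l

/-- The net consisting of two cells with symbols s₁, s₂ joined by their
principal ports, all auxiliary ports wired to distinct free ports. -/
def IsRedexNet (ar : S → ℕ) (R : PreNet S) (s₁ s₂ : S) : Prop :=
  ∃ (b c : ℕ) (bs cs as' ds : List ℕ),
    bs.length = ar s₁ ∧ cs.length = ar s₂ ∧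
    as'.length = ar s₁ ∧ ds.length = ar s₂ ∧
    (b :: c :: (bs ++ cs ++ as' ++ ds)).Nodup ∧
    R.w = pairsRel ((b, c) :: (as'.zip bs ++ cs.zip ds)) ∧
    R.c = rsum (cycleRel (b :: bs)) (cycleRel (c :: cs)) ∧
    R.pal = (fun x => x = b ∨ x = c) ∧
    (∀ x ∈ b :: bs, R.lbl x = some s₁) ∧ (∀ x ∈ c :: cs, R.lbl x = some s₂)

/-- Canonical interface: an ordering of all the free ports. -/
def IsCanonical (R : PreNet S) (I : List ℕ) : Prop :=
  I.Nodup ∧ ∀ x, x ∈ I ↔ x ∈ fports R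

/-- An interaction rule: a redex context and a pattern context with
canonical interfaces of the same size. -/
structure Rule (S : Type) where
  s₁ : S
  s₂ : S
  Rr : PreNet S
  Ir : List ℕ
  Rp : PreNet S
  Ip : List ℕ

def Rule.Wf (ar : S → ℕ) (ρ : Rule S) : Prop :=
  IsNet ar ρ.Rr ∧ IsNet ar ρ.Rp ∧ IsRedexNet ar ρ.Rr ρ.s₁ ρ.s₂ ∧
  IsCanonical ρ.Rr ρ.Ir ∧ IsCanonical ρ.Rp ρ.Ip ∧ ρ.Ir.length = ρ.Ip.length

/-- One reduction step by rule ρ, rewriting the redex occupying the set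
`Q` of ports. -/
def ReducesAt (ar : S → ℕ) (ρ : Rule S) (T T' : PreNet S) (Q : Set ℕ) : Prop :=
  ∃ (R₀ : PreNet S) (I : List ℕ) (e e' : ℕ → ℕ),
    IsNet ar R₀ ∧ IsRenaming e ρ.Rr ∧ IsRenaming e' ρ.Rp ∧
    IsInterface R₀ I ∧ I.length = ρ.Ir.length ∧
    Disjoint (carrier R₀) (carrier (rename e ρ.Rr)) ∧
    Disjoint (carrier R₀) (carrier (rename e' ρ.Rp)) ∧
    IsGlueMap (chordRel I (ρ.Ir.map e)) R₀ (rename e ρ.Rr) ∧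
    IsGlueMap (chordRel I (ρ.Ip.map e')) R₀ (rename e' ρ.Rp) ∧
    Q = carrier (rename e ρ.Rr) ∧
    T = glue R₀ (rename e ρ.Rr) (chordRel I (ρ.Ir.map e)) ∧
    T' = glue R₀ (rename e' ρ.Rp) (chordRel I (ρ.Ip.map e'))

def Reduces (ar : S → ℕ) (ρ : Rule S) (T T' : PreNet S) : Prop :=
  ∃ Q, ReducesAt ar ρ T T' Q

/-! ### Auxiliary lemmas for morphism extension -/

private lemma iterRel_concat {r : Rel'} :
    ∀ {m n x y z}, iterRel r n x y → iterRel r m y z → iterRel r (n + m) x z := by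
  intro m
  induction m with
  | zero => intro n x y z h1 h2; exact h2 ▸ h1
  | succ m ih =>
    intro n x y z h1 h2
    obtain ⟨w, hw, hr⟩ := h2
    exact ⟨w, ih h1 hw, hr⟩

private lemma iterRel_split {r : Rel'} :
    ∀ {m n x z}, iterRel r (n + m) x z → ∃ y, iterRel r n x y ∧ iterRel r m y z := by
  intro m
  induction m with
  | zero => intro n x z h; exact ⟨z, h, rfl⟩
  | succ m ih =>
    intro n x z h
    obtain ⟨w, hw, hr⟩ := h
    obtain ⟨y, h1, h2⟩ := ih hw
    exact ⟨y, h1, w, h2, hr⟩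

private lemma iterRel_fun {r : Rel'} (hr : ∀ x y y', r x y → r x y' → y = y') :
    ∀ {n x y y'}, iterRel r n x y → iterRel r n x y' → y = y' := by
  intro n
  induction n with
  | zero => intro x y y' h1 h2; exact h1.symm.trans h2
  | succ n ih =>
    intro x y y' h1 h2
    obtain ⟨w, hw, hrw⟩ := h1
    obtain ⟨w', hw', hrw'⟩ := h2
    cases ih hw hw'
    exact hr _ _ _ hrw hrw'

private lemma iterRel_inj {r : Rel'} (hr : ∀ x x' y, r x y → r x' y → x = x')
    (hfun : ∀ x y y', r x y → r x y' → y = y') :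
    ∀ {n x x' y}, iterRel r n x y → iterRel r n x' y → x = x' := by
  intro n
  induction n with
  | zero => intro x x' y h1 h2; exact h1.trans h2.symm
  | succ n ih =>
    intro x x' y h1 h2
    obtain ⟨w, hw, hrw⟩ := h1
    obtain ⟨w', hw', hrw'⟩ := h2
    cases hr _ _ _ hrw hrw'
    exact ih hw hw'

/-- Reversal: iterating `b then a` from x to y reversed is iterating `a then b`
from y to x, for symmetric a, b.  Note `comp a b` applies `b` first. -/
private lemma iterRel_comp_swap {a b : Rel'} (ha : ∀ x y, a x y → a y x)
    (hb : ∀ x y, b x y → b y x) :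
    ∀ {n x y}, iterRel (comp a b) n x y → iterRel (comp b a) n y x := by
  intro n
  induction n with
  | zero => intro x y h; exact h.symm
  | succ n ih =>
    intro x y h
    obtain ⟨w, hw, e, hbe, hae⟩ := h
    have h1 : iterRel (comp b a) 1 y w := ⟨y, rfl, e, ha _ _ hae, hb _ _ hbe⟩
    have h2 := iterRel_concat h1 (ih hw)
    rwa [Nat.add_comm] at h2

/-- Conjugation: a cycle of `a then b` transfers along `a` to a cycle
of `b then a`. -/
private lemma iterRel_conj {a b : Rel'} (hafun : ∀ x y y', a x y → a x y' → y = y') :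
    ∀ {n q r q' r'}, iterRel (comp b a) n q r → a q q' → a r r' →
      iterRel (comp a b) n q' r' := by
  intro n
  induction n with
  | zero =>
    intro q r q' r' h h1 h2
    cases h
    exact hafun _ _ _ h1 h2
  | succ n ih =>
    intro q r q' r' h h1 h2
    obtain ⟨w, hw, e, hae, hbe⟩ := h
    exact ⟨e, ih hw h1 hae, r, hbe, h2⟩

/-- Going backwards along the chain from `a` extends a wire `w a b` on its left end. -/
private lemma iter_of_back {w g : Rel'} (hw : ∀ x y, w x y → w y x)
    (hg : ∀ x y, g x y → g y x) :
    ∀ {n a a' b}, iterRel (comp w g) n a a' → w a b → iter w g n a' b := by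
  intro n
  induction n with
  | zero => intro a a' b h hab; exact h ▸ hab
  | succ n ih =>
    intro a a' b h hab
    obtain ⟨c, hc, e, hge, hwe⟩ := h
    exact ⟨c, ⟨e, hw _ _ hwe, hg _ _ hge⟩, ih hc hab⟩

private lemma iter_snoc_s16 {w g : Rel'} :
    ∀ {n a b b'}, iter w g n a b → comp w g b b' → iter w g (n + 1) a b' := by
  intro n
  induction n with
  | zero =>
    intro a b b' h hbb
    obtain ⟨e, hge, hwe⟩ := hbb
    exact ⟨e, ⟨b, h, hge⟩, hwe⟩
  | succ n ih =>
    intro a b b' h hbb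
    obtain ⟨y, hy, hity⟩ := h
    exact ⟨y, hy, ih hity hbb⟩

/-- Going forwards along the chain from `b` extends a wire on its right end. -/
private lemma iter_append {w g : Rel'} :
    ∀ {m n a b b'}, iter w g n a b → iterRel (comp w g) m b b' → iter w g (n + m) a b' := by
  intro m
  induction m with
  | zero => intro n a b b' h1 h2; exact h2 ▸ h1
  | succ m ih =>
    intro n a b b' h1 h2
    obtain ⟨c, hc, hstep⟩ := h2
    exact iter_snoc_s16 (ih h1 hc) hstep

private lemma iterRel_cycle_mul {r : Rel'} {p x} (h : iterRel r p x x) :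
    ∀ c, iterRel r (c * p) x x := by
  intro c
  induction c with
  | zero => rw [Nat.zero_mul]; exact rfl
  | succ c ih => rw [Nat.succ_mul]; exact iterRel_concat ih h

/-- A point lies on a chain-cycle. -/
private def onCyc (w g : Rel') (q : ℕ) : Prop := ∃ p, 1 ≤ p ∧ iterRel (comp w g) p q q

open Classical in
/-- The exit point of the chain starting at `q` (apply `g` then `w` repeatedly). -/
private noncomputable def exitPt (w g : Rel') (q : ℕ) : ℕ :=
  if h : ∃ c, (∃ n, iterRel (comp w g) n q c) ∧ c ∉ dom g then h.choose else q

private lemma exitPt_spec {w g : Rel'} {q : ℕ}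
    (h : ∃ c, (∃ n, iterRel (comp w g) n q c) ∧ c ∉ dom g) :
    (∃ n, iterRel (comp w g) n q (exitPt w g q)) ∧ exitPt w g q ∉ dom g := by
  unfold exitPt
  rw [dif_pos h]
  exact h.choose_spec

private lemma iterRel_comp_stay {w g : Rel'} : ∀ {n q c}, iterRel (comp w g) n q c →
    q ∉ dom g → c = q := by
  intro n q c h hq
  cases n with
  | zero => exact h.symm
  | succ n =>
    obtain ⟨y, hy1, hy2⟩ := iterRel_split (n := 1) (m := n)
      (show iterRel (comp w g) (1 + n) q c by rw [Nat.add_comm]; exact h)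
    obtain ⟨v, hv, e, hge, -⟩ := hy1
    have hv' : q = v := hv
    subst hv'
    exact absurd ⟨e, hge⟩ hq

private lemma exitPt_self {w g : Rel'} {q : ℕ} (hq : q ∉ dom g) : exitPt w g q = q := by
  unfold exitPt
  by_cases h : ∃ c, (∃ n, iterRel (comp w g) n q c) ∧ c ∉ dom g
  · rw [dif_pos h]
    obtain ⟨⟨n, hn⟩, -⟩ := h.choose_spec
    exact iterRel_comp_stay hn hq
  · rw [dif_neg h]

private lemma onCyc_mem_dom {w g : Rel'} {q : ℕ} (h : onCyc w g q) : q ∈ dom g := by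
  obtain ⟨p, hp, hcyc⟩ := h
  obtain ⟨k, rfl⟩ : ∃ k, p = 1 + k := ⟨p - 1, by omega⟩
  obtain ⟨y, h1, -⟩ := iterRel_split hcyc
  obtain ⟨v, hv, e, hge, -⟩ := h1
  have hv' : q = v := hv
  subst hv'
  exact ⟨e, hge⟩

private lemma onCyc_transfer {w g : Rel'} (hwsym : ∀ x y, w x y → w y x)
    (hwfun : ∀ x y y', w x y → w x y' → y = y')
    (hgsym : ∀ x y, g x y → g y x) {a b : ℕ} (hab : w a b)
    (h : onCyc w g a) : onCyc w g b := by
  obtain ⟨p, hp, hcyc⟩ := h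
  exact ⟨p, hp, iterRel_conj hwfun (iterRel_comp_swap hwsym hgsym hcyc) hab hab⟩

private lemma iterRel_comp_dom {w g : Rel'} (hwsym : ∀ x y, w x y → w y x) :
    ∀ {n q c}, iterRel (comp w g) n q c → q ∈ dom w → c ∈ dom w := by
  intro n q c h hq
  cases n with
  | zero => have h' : q = c := h; exact h' ▸ hq
  | succ n =>
    obtain ⟨v, -, e, -, hwe⟩ := h
    exact ⟨e, hwsym _ _ hwe⟩

/-- If there is no chain-cycle through `q`, the chain from `q` exits `dom g`. -/
private lemma exit_exists {w g : Rel'}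
    (hwsym : ∀ x y, w x y → w y x)
    (hwfun : ∀ x y y', w x y → w x y' → y = y')
    (hgsym : ∀ x y, g x y → g y x)
    (hgfun : ∀ x y y', g x y → g x y' → y = y')
    (hdom : ∀ q, q ∈ dom g → q ∈ dom w)
    (hfin : (dom g).Finite) {q : ℕ} (hq : ¬ onCyc w g q) :
    ∃ c, (∃ n, iterRel (comp w g) n q c) ∧ c ∉ dom g := by
  by_contra hno
  push_neg at hno
  have hchfun : ∀ x y y', comp w g x y → comp w g x y' → y = y' := by
    rintro x y y' ⟨e, hge, hwe⟩ ⟨e', hge', hwe'⟩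
    obtain rfl := hgfun _ _ _ hge hge'
    exact hwfun _ _ _ hwe hwe'
  have hchinj : ∀ x x' y, comp w g x y → comp w g x' y → x = x' := by
    rintro x x' y ⟨e, hge, hwe⟩ ⟨e', hge', hwe'⟩
    obtain rfl := hwfun _ _ _ (hwsym _ _ hwe) (hwsym _ _ hwe')
    exact hgfun _ _ _ (hgsym _ _ hge) (hgsym _ _ hge')
  have hdef : ∀ n, ∃ c, iterRel (comp w g) n q c := by
    intro n
    induction n with
    | zero => exact ⟨q, rfl⟩
    | succ n ih =>
      obtain ⟨c, hc⟩ := ih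
      obtain ⟨e, hge⟩ := hno c ⟨n, hc⟩
      obtain ⟨r0, hr0⟩ := hdom e ⟨c, hgsym _ _ hge⟩
      exact ⟨r0, c, hc, e, hge, hr0⟩
  have hu : ∀ n, iterRel (comp w g) n q ((hdef n).choose) := fun n => (hdef n).choose_spec
  obtain ⟨i0, -, j0, -, hij, huv⟩ :=
    Set.infinite_univ.exists_ne_map_eq_of_mapsTo
      (f := fun n => (hdef n).choose) (t := dom g)
      (fun n _ => hno ((hdef n).choose) ⟨n, hu n⟩) hfin
  obtain ⟨i, j, hlt, he⟩ :
      ∃ i j, i < j ∧ (hdef i).choose = (hdef j).choose := by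
    rcases Nat.lt_or_ge i0 j0 with h | h
    · exact ⟨i0, j0, h, huv⟩
    · exact ⟨j0, i0, by omega, huv.symm⟩
  have hd1 : 1 ≤ j - i := by omega
  obtain ⟨y, hy1, hy2⟩ := iterRel_split (n := i) (m := j - i)
    (show iterRel (comp w g) (i + (j - i)) q ((hdef j).choose) by
      rw [Nat.add_sub_cancel' (le_of_lt hlt)]; exact hu j)
  obtain rfl := iterRel_fun hchfun hy1 (hu i)
  rw [← he] at hy2
  have h1 : iterRel (comp w g) (i + (j - i)) q ((hdef i).choose) :=
    iterRel_concat (hu i) hy2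
  have h1' : iterRel (comp w g) ((j - i) + i) q ((hdef i).choose) := by
    rw [Nat.add_comm]; exact h1
  obtain ⟨y2, hy21, hy22⟩ := iterRel_split (n := j - i) (m := i) h1'
  have hq2 : y2 = q := iterRel_inj hchinj hchfun hy22 (hu i)
  exact hq ⟨j - i, hd1, hq2 ▸ hy21⟩

/-- In a cycle, the minimum of the (reverse-)orbit is a loop point lying in the
same connected component. -/
private lemma loop_min_exists {w g : Rel'}
    (hwsym : ∀ x y, w x y → w y x)
    (hwfun : ∀ x y y', w x y → w x y' → y = y')
    (hgsym : ∀ x y, g x y → g y x)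
    (hgfun : ∀ x y y', g x y → g x y' → y = y')
    {q p : ℕ} (hp : 1 ≤ p) (hcyc : iterRel (comp w g) p q q) :
    ∃ m, ((∃ n, 1 ≤ n ∧ iterRel (comp g w) n m m) ∧
        ∀ y, (∃ n, iterRel (comp g w) n m y) → m ≤ y) ∧
      Relation.ReflTransGen (rsum w g) q m := by
  have hcstfun : ∀ x y y', comp g w x y → comp g w x y' → y = y' := by
    rintro x y y' ⟨e, hwe, hge⟩ ⟨e', hwe', hge'⟩
    obtain rfl := hwfun _ _ _ hwe hwe'
    exact hgfun _ _ _ hge hge'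
  have hcst : iterRel (comp g w) p q q := iterRel_comp_swap hwsym hgsym hcyc
  have hne : ({z | ∃ n, iterRel (comp g w) n q z}).Nonempty := ⟨q, 0, rfl⟩
  obtain ⟨k, hk⟩ := Nat.sInf_mem hne
  have hkN : k ≤ (k + 1) * p := by
    calc k ≤ (k + 1) * 1 := by omega
    _ ≤ (k + 1) * p := Nat.mul_le_mul_left _ hp
  have hNcyc : iterRel (comp g w) ((k + 1) * p) q q := iterRel_cycle_mul hcst (k + 1)
  obtain ⟨y, hy1, hy2⟩ := iterRel_split (n := k) (m := (k + 1) * p - k)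
    (show iterRel (comp g w) (k + ((k + 1) * p - k)) q q by
      rw [Nat.add_sub_cancel' hkN]; exact hNcyc)
  obtain rfl := iterRel_fun hcstfun hy1 hk
  have hmm := iterRel_concat hy2 hk
  have hrtg : ∀ n x z, iterRel (comp g w) n x z →
      Relation.ReflTransGen (rsum w g) x z := by
    intro n
    induction n with
    | zero =>
      intro x z h
      have h' : x = z := h
      subst h'
      exact Relation.ReflTransGen.refl
    | succ n ih =>
      intro x z h
      obtain ⟨v, hv, e, hwe, hge⟩ := h
      exact ((ih _ _ hv).tail (Or.inl hwe)).tail (Or.inr hge)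
  refine ⟨_, ⟨⟨((k + 1) * p - k) + k, ?_, hmm⟩, ?_⟩, hrtg _ _ _ hk⟩
  · have : 1 ≤ (k + 1) * p := Nat.mul_pos (Nat.succ_pos k) hp
    omega
  · rintro y0 ⟨n, hn⟩
    exact Nat.sInf_le ⟨k + n, iterRel_concat hk hn⟩

open Classical in
/-- The extension of a morphism `α` along a gluing: follow chains to their exit
points, and send wires absorbed into loops to the corresponding loop point. -/
private noncomputable def extMap (σ τ f : Rel') (α : ℕ → ℕ) (x : ℕ) : ℕ :=
  if onCyc (rsum σ τ) (rsum f (inv f)) (α x) then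
    sInf (loopPts σ τ f ∩
      {z | Relation.ReflTransGen (rsum (rsum σ τ) (rsum f (inv f))) (α x) z})
  else exitPt (rsum σ τ) (rsum f (inv f)) (α x)

/-- extension of morphisms along gluing: a morphism α : R → T₀
extends to a morphism α̂ : R → T₀ ⋈_f T₁ agreeing with α on cell ports and
loops of R. -/
theorem morphism_extension {S : Type} (ar : S → ℕ)
    (R T₀ T₁ : PreNet S) (α : ℕ → ℕ) (f : Rel')
    (hR : IsNet ar R) (hT₀ : IsNet ar T₀) (hT₁ : IsNet ar T₁)
    (hm : IsMorphism α R T₀)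
    (hd : Disjoint (carrier T₀) (carrier T₁))
    (hf : IsGlueMap f T₀ T₁) :
    ∃ αh : ℕ → ℕ, IsMorphism αh R (glue T₀ T₁ f) ∧
      (∀ p ∈ cports R, αh p = α p) ∧
      (∀ p ∈ netLoops R, αh p = α p) := by
  classical
  have hσ := hT₀.1
  have hτ := hT₁.1
  have hσsym := hσ.2.1
  have hτsym := hτ.2.1
  have hdisj : ∀ q, q ∈ dom T₀.w → q ∈ dom T₁.w → False := fun q h0 h1 =>
    Set.disjoint_left.mp hd h0 h1
  have hωsym : ∀ a b, rsum T₀.w T₁.w a b → rsum T₀.w T₁.w b a := by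
    rintro a b (h | h)
    exacts [Or.inl (hσsym _ _ h), Or.inr (hτsym _ _ h)]
  have hωfun : ∀ a b b', rsum T₀.w T₁.w a b → rsum T₀.w T₁.w a b' → b = b' := by
    rintro a b b' (h | h) (h' | h')
    · exact hσ.1.1 _ _ _ h h'
    · exact (hdisj a ⟨b, h⟩ ⟨b', h'⟩).elim
    · exact (hdisj a ⟨b', h'⟩ ⟨b, h⟩).elim
    · exact hτ.1.1 _ _ _ h h'
  have hfd0 : ∀ a b, f a b → a ∈ dom T₀.w := fun a b h => (hf.2.1 ⟨b, h⟩).1.1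
  have hfd1 : ∀ a b, f a b → b ∈ dom T₁.w := fun a b h => (hf.2.2 ⟨a, h⟩).1.1
  have hgsym : ∀ a b, rsum f (inv f) a b → rsum f (inv f) b a := by
    rintro a b (h | h)
    exacts [Or.inr h, Or.inl h]
  have hgfun : ∀ a b b', rsum f (inv f) a b → rsum f (inv f) a b' → b = b' := by
    rintro a b b' (h | h) (h' | h')
    · exact hf.1.1 _ _ _ h h'
    · exact (hdisj a (hfd0 _ _ h) (hfd1 _ _ h')).elim
    · exact (hdisj a (hfd0 _ _ h') (hfd1 _ _ h)).elim
    · exact hf.1.2 _ _ _ h h'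
  have hgdomw : ∀ q, q ∈ dom (rsum f (inv f)) → q ∈ dom (rsum T₀.w T₁.w) := by
    rintro q ⟨y, h | h⟩
    · obtain ⟨z, hz⟩ := hfd0 _ _ h; exact ⟨z, Or.inl hz⟩
    · obtain ⟨z, hz⟩ := hfd1 _ _ h; exact ⟨z, Or.inr hz⟩
  have hgfin : (dom (rsum f (inv f))).Finite := by
    refine (hσ.2.2.union hτ.2.2).subset ?_
    intro q hq
    obtain ⟨z, hz | hz⟩ := hgdomw q hq
    exacts [Or.inl ⟨z, hz⟩, Or.inr ⟨z, hz⟩]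
  have hnog : ∀ q, q ∈ cports T₀ → q ∈ dom (rsum f (inv f)) → False := by
    rintro q hq ⟨y, h | h⟩
    · exact (hf.2.1 ⟨y, h⟩).2 hq
    · exact hdisj q (hT₀.2.2.2.1 hq).1 (hf.2.2 ⟨y, h⟩).1.1
  have hα0 : ∀ p, p ∈ cports R → α p ∉ dom (rsum f (inv f)) :=
    fun p hp hg => hnog _ (hm.2.1 p hp) hg
  have hαloop : ∀ p, p ∈ netLoops R → α p ∉ dom (rsum f (inv f)) := by
    intro p hp
    have hw : T₀.w (α p) (α p) := hm.1 p p hp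
    rintro ⟨y, h | h⟩
    · exact (hf.2.1 ⟨y, h⟩).1.2 hw
    · exact hdisj (α p) ⟨α p, hw⟩ ((hf.2.2 ⟨y, h⟩).1.1)
  have hfix : ∀ q, α q ∉ dom (rsum f (inv f)) → extMap T₀.w T₁.w f α q = α q := by
    intro q hq
    have hnc : ¬ onCyc (rsum T₀.w T₁.w) (rsum f (inv f)) (α q) :=
      fun hc => hq (onCyc_mem_dom hc)
    simp only [extMap]
    rw [if_neg hnc]
    exact exitPt_self hq
  refine ⟨extMap T₀.w T₁.w f α, ⟨?_, ?_, ?_, ?_, ?_⟩,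
    fun p hp => hfix p (hα0 p hp), fun p hp => hfix p (hαloop p hp)⟩
  · -- wires
    intro x y hxy
    have hab : T₀.w (α x) (α y) := hm.1 x y hxy
    have hωab : rsum T₀.w T₁.w (α x) (α y) := Or.inl hab
    show cexece T₀.w T₁.w f _ _
    by_cases hcy : onCyc (rsum T₀.w T₁.w) (rsum f (inv f)) (α x)
    · have hcyb : onCyc (rsum T₀.w T₁.w) (rsum f (inv f)) (α y) :=
        onCyc_transfer hωsym hωfun hgsym hωab hcy
      simp only [extMap]
      rw [if_pos hcy, if_pos hcyb]
      have hset :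
          {z | Relation.ReflTransGen (rsum (rsum T₀.w T₁.w) (rsum f (inv f))) (α x) z} =
          {z | Relation.ReflTransGen (rsum (rsum T₀.w T₁.w) (rsum f (inv f))) (α y) z} := by
        ext z
        exact ⟨fun h => Relation.ReflTransGen.head (Or.inl (hωsym _ _ hωab)) h,
               fun h => Relation.ReflTransGen.head (Or.inl hωab) h⟩
      rw [hset]
      obtain ⟨p, hp, hcyc⟩ := hcyb
      obtain ⟨m, hm1, hm2⟩ := loop_min_exists hωsym hωfun hgsym hgfun hp hcyc
      have hmem : m ∈ loopPts T₀.w T₁.w f ∩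
          {z | Relation.ReflTransGen (rsum (rsum T₀.w T₁.w) (rsum f (inv f))) (α y) z} :=
        ⟨hm1, hm2⟩
      exact Or.inr ⟨rfl, (Nat.sInf_mem ⟨m, hmem⟩).1⟩
    · have hcyb : ¬ onCyc (rsum T₀.w T₁.w) (rsum f (inv f)) (α y) :=
        fun h => hcy (onCyc_transfer hωsym hωfun hgsym (hωsym _ _ hωab) h)
      obtain ⟨⟨n, hn⟩, hng⟩ :=
        exitPt_spec (exit_exists hωsym hωfun hgsym hgfun hgdomw hgfin hcy)
      obtain ⟨⟨m0, hm0⟩, hmg⟩ :=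
        exitPt_spec (exit_exists hωsym hωfun hgsym hgfun hgdomw hgfin hcyb)
      simp only [extMap]
      rw [if_neg hcy, if_neg hcyb]
      refine Or.inl ⟨n + m0,
        iter_append (iter_of_back hωsym hgsym hn hωab) hm0, ⟨?_, ?_⟩, ⟨?_, ?_⟩⟩
      · obtain ⟨z, hz | hz⟩ := iterRel_comp_dom hωsym hn ⟨α y, hωab⟩
        exacts [Or.inl ⟨z, hz⟩, Or.inr ⟨z, hz⟩]
      · rintro (⟨z, hz⟩ | ⟨z, hz⟩)
        · exact hng ⟨z, Or.inl hz⟩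
        · exact hng ⟨z, Or.inr hz⟩
      · obtain ⟨z, hz | hz⟩ := iterRel_comp_dom hωsym hm0 ⟨α x, hωsym _ _ hωab⟩
        exacts [Or.inl ⟨z, hz⟩, Or.inr ⟨z, hz⟩]
      · rintro (⟨z, hz⟩ | ⟨z, hz⟩)
        · exact hmg ⟨z, Or.inl hz⟩
        · exact hmg ⟨z, Or.inr hz⟩
  · -- cell ports
    intro x hx
    rw [hfix x (hα0 x hx)]
    obtain ⟨z, hz⟩ := hm.2.1 x hx
    exact ⟨z, Or.inl hz⟩
  · -- cells
    intro x y hxy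
    have hx : x ∈ cports R := ⟨y, hxy⟩
    have hy : y ∈ cports R := by
      show y ∈ dom R.c
      rw [hR.2.2.1]
      exact ⟨x, hxy⟩
    rw [hfix x (hα0 x hx), hfix y (hα0 y hy)]
    exact Or.inl (hm.2.2.1 x y hxy)
  · -- principal ports
    intro x hx
    have hx' : x ∈ cports R := hR.2.2.2.2.2.2.1 x hx
    rw [hfix x (hα0 x hx')]
    exact Or.inl (hm.2.2.2.1 x hx)
  · -- labels
    intro x hx
    rw [hfix x (hα0 x hx)]
    have h5 := hm.2.2.2.2 x hx
    have hc : (T₀.lbl (α x)).isSome := (hT₀.2.2.2.2.1 (α x)).2 (hm.2.1 x hx)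
    obtain ⟨s, hs⟩ := Option.isSome_iff_exists.mp hc
    show R.lbl x = (T₀.lbl (α x)).orElse (fun _ => T₁.lbl (α x))
    rw [h5, hs]
    rfl

end IN
end
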